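/- arXiv:1611.05558 — 9 statements merged into one kernel-verified Lean document; each statement's English description precedes it below -/
import Mathlib

section
/- There exist constants c₁ > 0, c₂ > 0, ε₀ > 0 such that for every field K and every ε ∈ (0, ε₀), there is an n₀ (which may depend on ε) so that for all n ≥ n₀ there exists a 2^n × 2^n matrix M' over K with rank(M') ≤ 5n·2^{n − c₁·ε²·n} such that, in every row, M' differs from the Walsh–Hadamard matrix H_n (over K) in at most 2^{c₂·ε·log₂(1/ε)·n} entries. -/
open scoped Classical
open Finset

noncomputable section

def ip {n : ℕ} (x y : Fin n → Bool) : ℕ :=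
  (Finset.univ.filter (fun i => x i ∧ y i)).card

def wt {n : ℕ} (x : Fin n → Bool) : ℕ :=
  (Finset.univ.filter (fun i => x i)).card

def Had (K : Type) [Field K] (n : ℕ) : Matrix (Fin n → Bool) (Fin n → Bool) K :=
  Matrix.of fun x y => (-1 : K) ^ ip x y

def diffCount {n : ℕ} {K : Type} [Field K]
    (A B : Matrix (Fin n → Bool) (Fin n → Bool) K) : ℕ :=
  Nat.card {p : (Fin n → Bool) × (Fin n → Bool) // A p.1 p.2 ≠ B p.1 p.2}

def ProbRankLE {n : ℕ} {K : Type} [Field K]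
    (A : Matrix (Fin n → Bool) (Fin n → Bool) K) (ε r : ℝ) : Prop :=
  ∃ (s : Finset (Matrix (Fin n → Bool) (Fin n → Bool) K))
    (w : Matrix (Fin n → Bool) (Fin n → Bool) K → ℝ),
    (∀ M ∈ s, 0 ≤ w M) ∧ (∑ M ∈ s, w M) = 1 ∧
    (∀ M ∈ s, ((M.rank : ℝ)) ≤ r) ∧
    ∀ x y : Fin n → Bool, 1 - ε ≤ ∑ M ∈ s, (if M x y = A x y then w M else 0)

open scoped symmDiff

/-!
Over any field, `(-1) ^ k` agrees on a window `a ≤ k ≤ a + D` with a combination of the binomials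
`k.choose i`, `i ≤ D` (Newton interpolation, which needs no division and so works in every
characteristic), and the matrix `((#(S ∩ T)).choose i)` has rank at most `n.choose i`. With
`D ≈ (1/2 - ε) n` and `a ≈ ε n / 4` this gives a matrix of rank at most
`∑ i ≤ D, n.choose i ≤ 2 ^ n e ^ (-2 ε² n)` that equals the Hadamard matrix wherever `#(S ∩ T)`
lies in the window. For balanced `S` and `T` (`|#S - n/2| ≤ ε n / 8`) the intersection leaves the
window only when `T` is within Hamming distance `2 ε n` of `S` or of `Sᶜ`, which happens for at
most `2 ^ O(ε log(1/ε) n)` sets `T`. Finally the rows and columns of the unbalanced sets, of which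
there are at most `2 ^ n e ^ (-ε² n / 32)` by the Chernoff bound, are reset to the Hadamard
matrix, at a rank cost of twice their number.
-/

namespace Matrix

variable {ι K : Type*} [Fintype ι] [Field K]

theorem rank_add_le (A B : Matrix ι ι K) : (A + B).rank ≤ A.rank + B.rank := by
  rw [rank, rank, rank, mulVecLin_add]
  refine (Submodule.finrank_mono ?_).trans (Submodule.finrank_add_le_finrank_add_finrank _ _)
  rintro _ ⟨v, rfl⟩
  exact Submodule.mem_sup.2 ⟨_, ⟨v, rfl⟩, _, ⟨v, rfl⟩, rfl⟩

theorem rank_sum_le {β : Type*} (s : Finset β) (A : β → Matrix ι ι K) :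
    (∑ b ∈ s, A b).rank ≤ ∑ b ∈ s, (A b).rank := by
  induction s using Finset.induction_on with
  | empty => simp
  | insert b s hb ih =>
    rw [sum_insert hb, sum_insert hb]
    exact (rank_add_le _ _).trans (by omega)

theorem rank_smul_le (c : K) (A : Matrix ι ι K) : (c • A).rank ≤ A.rank := by
  calc (c • A).rank = (A * (c • 1 : Matrix ι ι K)).rank := by rw [Matrix.mul_smul, mul_one]
    _ ≤ A.rank := rank_mul_le_left _ _

theorem rank_le_card_of_forall_notMem_eq_zero (A : Matrix ι ι K) (s : Finset ι)
    (h : ∀ j ∉ s, ∀ i, A i j = 0) : A.rank ≤ #s := by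
  rw [← rank_transpose]
  exact rank_le_card_of_support_subset _ s fun j hj => by
    by_contra hjs
    exact hj (funext fun i => h j hjs i)

theorem rank_le_rank_add_two_mul_card (A B : Matrix ι ι K) (s : Finset ι)
    (h : ∀ i j, i ∉ s → j ∉ s → A i j = B i j) : A.rank ≤ B.rank + 2 * #s := by
  let R : Matrix ι ι K := of fun i j => if i ∈ s then (A - B) i j else 0
  have hR : R.rank ≤ #s := rank_le_card_of_support_subset _ s fun i hi => by
    by_contra his
    exact hi (funext fun j => if_neg his)
  have hC : (A - B - R).rank ≤ #s := rank_le_card_of_forall_notMem_eq_zero _ s fun j hj i => by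
    by_cases hi : i ∈ s <;> simp [R, hi, h i j _ hj]
  calc A.rank = (B + R + (A - B - R)).rank := by congr 1; abel
    _ ≤ B.rank + R.rank + (A - B - R).rank := (rank_add_le _ _).trans (by grw [rank_add_le])
    _ ≤ B.rank + 2 * #s := by omega

end Matrix

theorem exists_sum_range_choose_smul_eq {M : Type*} [AddCommGroup M] (a D : ℕ) (f : ℕ → M) :
    ∃ c : ℕ → M, ∀ k, a ≤ k → k ≤ a + D → ∑ i ∈ range (D + 1), k.choose i • c i = f k := by
  induction D generalizing f with
  | zero =>
    refine ⟨fun _ => f a, fun k hak hka => ?_⟩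
    obtain rfl : k = a := by omega
    simp
  | succ D ih =>
    obtain ⟨c, hc⟩ := ih fun k => f (k + 1) - f k
    let G : ℕ → M := fun k => ∑ i ∈ range (D + 1), k.choose (i + 1) • c i
    have hG : ∀ k, G (k + 1) = G k + ∑ i ∈ range (D + 1), k.choose i • c i := fun k => by
      simp only [G, Nat.choose_succ_succ', add_smul, sum_add_distrib]
      abel
    refine ⟨fun | 0 => f a - G a | i + 1 => c i, fun k hak hka => ?_⟩
    rw [sum_range_succ']
    simp only [Nat.choose_zero_right, one_smul]
    change G k + (f a - G a) = f k
    induction k, hak using Nat.le_induction with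
    | base => abel
    | succ k hak ih' =>
      rw [hG, hc k hak (by omega), ← ih' (by omega)]
      abel

theorem card_symmDiff_add_two_mul_card_inter {α : Type*} [DecidableEq α] (S T : Finset α) :
    #(S ∆ T) + 2 * #(S ∩ T) = #S + #T := by
  rw [symmDiff_def, sup_eq_union, card_union_of_disjoint disjoint_sdiff_sdiff]
  have h₁ := card_sdiff_add_card_inter S T
  have h₂ := card_sdiff_add_card_inter T S
  rw [inter_comm] at h₂
  omega

section

variable (K : Type*) [Field K] (α : Type*) [Fintype α]

def finsetHadamard : Matrix (Finset α) (Finset α) K :=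
  Matrix.of fun S T => (-1) ^ #(S ∩ T)

def interChooseMatrix (i : ℕ) : Matrix (Finset α) (Finset α) K :=
  Matrix.of fun S T => ((#(S ∩ T)).choose i : K)

variable {K α}

theorem rank_interChooseMatrix_le (i : ℕ) :
    (interChooseMatrix K α i).rank ≤ (Fintype.card α).choose i := by
  let V : Matrix (Finset α) (powersetCard i (univ : Finset α)) K :=
    Matrix.of fun S U => if (U : Finset α) ⊆ S then 1 else 0
  have hV : interChooseMatrix K α i = V * V.transpose := by
    ext S T
    have : (powersetCard i univ).filter (· ⊆ S ∩ T) = powersetCard i (S ∩ T) := by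
      ext U
      simp [mem_powersetCard, and_comm]
    simp only [interChooseMatrix, V, Matrix.mul_apply, Matrix.of_apply, Matrix.transpose_apply,
      ite_zero_mul_ite_zero, mul_one, ← subset_inter_iff]
    rw [sum_coe_sort (powersetCard i univ) fun U => if U ⊆ S ∩ T then (1 : K) else 0,
      sum_boole, this, card_powersetCard]
  rw [hV]
  exact (Matrix.rank_mul_le_left _ _).trans ((Matrix.rank_le_card_width _).trans (by simp))

theorem exists_rank_le_eq_finsetHadamard (a D : ℕ) :
    ∃ P : Matrix (Finset α) (Finset α) K,
      P.rank ≤ ∑ i ∈ range (D + 1), (Fintype.card α).choose i ∧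
      ∀ S T, a ≤ #(S ∩ T) → #(S ∩ T) ≤ a + D → P S T = finsetHadamard K α S T := by
  obtain ⟨c, hc⟩ := exists_sum_range_choose_smul_eq a D fun k => (-1 : K) ^ k
  refine ⟨∑ i ∈ range (D + 1), c i • interChooseMatrix K α i, ?_, fun S T h₁ h₂ => ?_⟩
  · refine (Matrix.rank_sum_le _ _).trans (sum_le_sum fun i _ => ?_)
    exact (Matrix.rank_smul_le _ _).trans (rank_interChooseMatrix_le i)
  · simp only [Matrix.sum_apply, Matrix.smul_apply, interChooseMatrix, finsetHadamard,
      Matrix.of_apply, ← hc _ h₁ h₂, smul_eq_mul, nsmul_eq_mul, mul_comm]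

theorem sum_range_choose_eq_card_card_le (D : ℕ) :
    ∑ i ∈ range (D + 1), (Fintype.card α).choose i = #{U : Finset α | #U ≤ D} := by
  rw [card_eq_sum_card_fiberwise (f := card) (t := range (D + 1))
    fun U hU => mem_range.2 (Nat.lt_succ_of_le (mem_filter.1 hU).2)]
  refine sum_congr rfl fun i hi => ?_
  rw [← card_univ, ← card_powersetCard, powersetCard_eq_filter, powerset_univ, filter_filter]
  congr 1
  ext U
  simp only [mem_filter, mem_univ, true_and]
  have := mem_range.1 hi
  omega

def IsBalanced (δ : ℝ) (S : Finset α) : Prop :=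
  |(#S : ℝ) - Fintype.card α / 2| ≤ δ * Fintype.card α

theorem card_balanced_inter_ge_le {δ γ r : ℝ} {S : Finset α} (hS : IsBalanced δ S)
    (hr : 2 * (δ + γ) * Fintype.card α ≤ r) :
    #{T | IsBalanced δ T ∧ (1 / 2 - γ) * Fintype.card α ≤ #(S ∩ T)} ≤
      #{U : Finset α | (#U : ℝ) ≤ r} := by
  refine card_le_card_of_injOn (· ∆ S) (fun T hT => ?_) (symmDiff_left_injective S).injOn
  simp only [coe_filter, Set.mem_ofPred_eq, mem_univ, true_and] at hT ⊢
  obtain ⟨hT, hST⟩ := hT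
  have h := card_symmDiff_add_two_mul_card_inter T S
  rw [inter_comm] at h
  unfold IsBalanced at hS hT
  rw [abs_le] at hS hT
  have hR : (#(T ∆ S) : ℝ) + 2 * #(S ∩ T) = #T + #S := by exact_mod_cast h
  linarith

theorem card_balanced_inter_le_le {δ γ r : ℝ} {S : Finset α} (hS : IsBalanced δ S)
    (hr : 2 * (2 * δ + γ) * Fintype.card α ≤ r) :
    #{T | IsBalanced δ T ∧ (#(S ∩ T) : ℝ) ≤ γ * Fintype.card α} ≤
      #{U : Finset α | (#U : ℝ) ≤ r} := by
  refine le_trans ?_ (card_balanced_inter_ge_le (γ := δ + γ) hS (by linarith))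
  refine card_le_card_of_injOn compl (fun T hT => ?_) compl_injective.injOn
  simp only [coe_filter, Set.mem_ofPred_eq, mem_univ, true_and] at hT ⊢
  obtain ⟨hT, hST⟩ := hT
  have hc : (#Tᶜ : ℝ) = Fintype.card α - #T := by
    rw [card_compl, Nat.cast_sub (card_le_univ T)]
  have hi : (#(S ∩ Tᶜ) : ℝ) = #S - #(S ∩ T) := by
    rw [← sdiff_eq_inter_compl, card_sdiff, inter_comm,
      Nat.cast_sub (card_le_card inter_subset_left)]
  unfold IsBalanced at hS hT ⊢
  rw [abs_le] at hS hT ⊢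
  constructor <;> [constructor; skip] <;> linarith

theorem card_balanced_inter_le_or_ge_le {ε : ℝ} (hε : 0 ≤ ε) {S : Finset α}
    (hS : IsBalanced (ε / 8) S) :
    #{T | IsBalanced (ε / 8) T ∧ ((#(S ∩ T) : ℝ) ≤ ε / 4 * Fintype.card α ∨
      (1 / 2 - 3 * ε / 4) * Fintype.card α ≤ #(S ∩ T))} ≤
      2 * #{U : Finset α | (#U : ℝ) ≤ 2 * ε * Fintype.card α} := by
  have hn : (0 : ℝ) ≤ Fintype.card α := Nat.cast_nonneg _
  simp only [and_or_left, filter_or]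
  refine (card_union_le _ _).trans ?_
  rw [two_mul]
  exact add_le_add (card_balanced_inter_le_le hS (by nlinarith))
    (card_balanced_inter_ge_le hS (by nlinarith))

open Real in
theorem card_card_le_le_exp_mul {s : ℝ} (hs : 0 ≤ s) (t : ℝ) :
    (#{U : Finset α | (#U : ℝ) ≤ t} : ℝ) ≤ exp (s * t) * (1 + exp (-s)) ^ Fintype.card α := by
  have hsum : ∑ U : Finset α, exp (-s) ^ #U = (1 + exp (-s)) ^ Fintype.card α := by
    simpa [add_comm] using sum_pow_mul_eq_add_pow (exp (-s)) 1 (univ : Finset α)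
  rw [← hsum, mul_sum, ← sum_boole]
  refine sum_le_sum fun U _ => ?_
  split_ifs with hU
  · rw [← exp_nat_mul, ← exp_add]
    exact one_le_exp (by nlinarith)
  · positivity

open Real in
theorem card_card_le_half_sub_le {β : ℝ} (hβ : 0 ≤ β) :
    (#{U : Finset α | (#U : ℝ) ≤ (1 / 2 - β) * Fintype.card α} : ℝ) ≤
      exp (Fintype.card α * log 2 - 2 * β ^ 2 * Fintype.card α) := by
  have hcosh : 1 + exp (-(4 * β)) ≤ exp (log 2 - 2 * β + 2 * β ^ 2) := by
    have e₁ : exp (-(2 * β)) * exp (2 * β) = 1 := by rw [← exp_add]; simp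
    have e₂ : exp (-(2 * β)) * exp (-(2 * β)) = exp (-(4 * β)) := by rw [← exp_add]; ring_nf
    calc 1 + exp (-(4 * β)) = 2 * exp (-(2 * β)) * cosh (2 * β) := by
          rw [cosh_eq]; linear_combination (-1 : ℝ) * e₁ - e₂
      _ ≤ 2 * exp (-(2 * β)) * exp ((2 * β) ^ 2 / 2) := by gcongr; exact cosh_le_exp_half_sq _
      _ = exp (log 2 - 2 * β + 2 * β ^ 2) := by
          rw [show log 2 - 2 * β + 2 * β ^ 2 = log 2 + -(2 * β) + (2 * β) ^ 2 / 2 by ring,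
            exp_add, exp_add, exp_log two_pos]
  refine (card_card_le_le_exp_mul (by linarith : 0 ≤ 4 * β) _).trans ?_
  calc exp (4 * β * ((1 / 2 - β) * Fintype.card α)) * (1 + exp (-(4 * β))) ^ Fintype.card α
      ≤ exp (4 * β * ((1 / 2 - β) * Fintype.card α)) *
          exp (log 2 - 2 * β + 2 * β ^ 2) ^ Fintype.card α := by gcongr
    _ = _ := by rw [← exp_nat_mul, ← exp_add]; ring_nf

theorem card_not_isBalanced_le {δ : ℝ} (hδ : 0 ≤ δ) :
    (#{S : Finset α | ¬IsBalanced δ S} : ℝ) ≤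
      2 * Real.exp (Fintype.card α * Real.log 2 - 2 * δ ^ 2 * Fintype.card α) := by
  set L := ({U : Finset α | (#U : ℝ) ≤ (1 / 2 - δ) * Fintype.card α} : Finset (Finset α))
  have hsub : ({S | ¬IsBalanced δ S} : Finset (Finset α)) ⊆ L ∪ L.image compl := by
    intro S hS
    simp only [IsBalanced, mem_filter, mem_univ, true_and, abs_le, not_and_or, not_le] at hS
    simp only [L, mem_union, mem_image, mem_filter, mem_univ, true_and]
    refine hS.imp (fun h => by linarith) fun h => ⟨Sᶜ, ?_, compl_compl S⟩
    rw [card_compl, Nat.cast_sub (card_le_univ S)]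
    linarith
  have hL := card_card_le_half_sub_le (α := α) hδ
  have hcard : #{S : Finset α | ¬IsBalanced δ S} ≤ 2 * #L :=
    (card_le_card hsub).trans ((card_union_le _ _).trans (by grw [card_image_le]; omega))
  calc (#{S : Finset α | ¬IsBalanced δ S} : ℝ) ≤ 2 * #L := by exact_mod_cast hcard
    _ ≤ _ := by gcongr

open Real in
theorem card_card_le_le_exp_log {ε : ℝ} (hε₀ : 0 < ε) (hε₁ : ε ≤ 1) (t : ℝ) :
    (#{U : Finset α | (#U : ℝ) ≤ t} : ℝ) ≤ exp (t * log (1 / ε) + ε * Fintype.card α) := by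
  refine (card_card_le_le_exp_mul (log_nonneg (one_le_one_div hε₀ hε₁)) t).trans ?_
  have hexp : exp (-log (1 / ε)) = ε := by rw [one_div, log_inv, neg_neg, exp_log hε₀]
  rw [hexp, exp_add, mul_comm t, mul_comm ε, exp_nat_mul]
  gcongr
  linarith [add_one_le_exp ε]

variable (K α) in
theorem exists_rank_le_card_ne_finsetHadamard_le {ε : ℝ} (hε : 0 < ε) :
    ∃ N : Matrix (Finset α) (Finset α) K,
      N.rank ≤ #{U : Finset α | #U ≤ ⌊(1 / 2 - ε) * Fintype.card α⌋₊} +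
        2 * #{S : Finset α | ¬IsBalanced (ε / 8) S} ∧
      ∀ S, #{T | N S T ≠ finsetHadamard K α S T} ≤
        2 * #{U : Finset α | (#U : ℝ) ≤ 2 * ε * Fintype.card α} := by
  set a := ⌈ε * Fintype.card α / 4⌉₊
  set D := ⌊(1 / 2 - ε) * Fintype.card α⌋₊
  obtain ⟨P, hPrank, hPH⟩ := exists_rank_le_eq_finsetHadamard (K := K) (α := α) a D
  let N : Matrix (Finset α) (Finset α) K := Matrix.of fun S T =>
    if IsBalanced (ε / 8) S ∧ IsBalanced (ε / 8) T then P S T else finsetHadamard K α S T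
  refine ⟨N, ?_, fun S => ?_⟩
  · rw [← sum_range_choose_eq_card_card_le]
    refine (Matrix.rank_le_rank_add_two_mul_card N P {S | ¬IsBalanced (ε / 8) S}
      fun S T hS hT => ?_).trans (by omega)
    simp_all [N]
  by_cases hS : IsBalanced (ε / 8) S
  · have hsub : ({T | N S T ≠ finsetHadamard K α S T} : Finset (Finset α)) ⊆
        ({T | IsBalanced (ε / 8) T ∧ ((#(S ∩ T) : ℝ) ≤ ε / 4 * Fintype.card α ∨
          (1 / 2 - 3 * ε / 4) * Fintype.card α ≤ #(S ∩ T))} : Finset _) := by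
      intro T hT
      simp only [N, mem_filter, mem_univ, true_and, Matrix.of_apply, hS] at hT
      split_ifs at hT with hT'
      swap
      · exact (hT rfl).elim
      have hband : ¬(a ≤ #(S ∩ T) ∧ #(S ∩ T) ≤ a + D) := fun h => hT (hPH S T h.1 h.2)
      simp only [mem_filter, mem_univ, true_and, hT']
      rcases not_and_or.1 hband with hlow | hhigh
      · have := Nat.lt_ceil.1 (not_le.1 hlow)
        exact Or.inl (by linarith)
      · have ha : ε * Fintype.card α / 4 ≤ a := Nat.le_ceil _
        have hD : (1 / 2 - ε) * Fintype.card α < D + 1 := Nat.lt_floor_add_one _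
        have hk : (a : ℝ) + D + 1 ≤ #(S ∩ T) := by exact_mod_cast not_le.1 hhigh
        exact Or.inr (by linarith)
    exact (card_le_card hsub).trans (card_balanced_inter_le_or_ge_le hε.le hS)
  · simp [N, hS]

open Real in
theorem card_card_le_floor_add_two_mul_card_not_isBalanced_le {ε : ℝ} (hε : 0 < ε)
    (hε₁ : ε ≤ 1 / 2) :
    (#{U : Finset α | #U ≤ ⌊(1 / 2 - ε) * Fintype.card α⌋₊} : ℝ) +
        2 * #{S : Finset α | ¬IsBalanced (ε / 8) S} ≤
      5 * 2 ^ ((Fintype.card α : ℝ) - 1 / 32 * ε ^ 2 * Fintype.card α) := by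
  have hn : (0 : ℝ) ≤ Fintype.card α := Nat.cast_nonneg _
  have hsmall : (#{U : Finset α | #U ≤ ⌊(1 / 2 - ε) * Fintype.card α⌋₊} : ℝ) ≤
      exp (Fintype.card α * log 2 - 2 * ε ^ 2 * Fintype.card α) := by
    refine le_trans ?_ (card_card_le_half_sub_le hε.le)
    refine Nat.cast_le.2 (card_le_card fun U hU => ?_)
    simp only [mem_filter, mem_univ, true_and] at hU ⊢
    exact (Nat.le_floor_iff (by nlinarith)).1 hU
  have hbad := card_not_isBalanced_le (α := α) (δ := ε / 8) (by positivity)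
  have hmono : exp (Fintype.card α * log 2 - 2 * ε ^ 2 * Fintype.card α) ≤
      exp (Fintype.card α * log 2 - 2 * (ε / 8) ^ 2 * Fintype.card α) := by
    gcongr; nlinarith
  have hbase : exp (Fintype.card α * log 2 - 2 * (ε / 8) ^ 2 * Fintype.card α) ≤
      2 ^ ((Fintype.card α : ℝ) - 1 / 32 * ε ^ 2 * Fintype.card α) := by
    rw [rpow_def_of_pos two_pos]
    gcongr
    nlinarith [log_two_lt_d9, mul_nonneg (sq_nonneg ε) hn]
  linarith

open Real in
theorem two_mul_card_card_le_le_rpow {ε : ℝ} (hε : 0 < ε) (hε₁ : ε ≤ 1 / 4)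
    (hεn : 1 ≤ ε * Fintype.card α) :
    2 * (#{U : Finset α | (#U : ℝ) ≤ 2 * ε * Fintype.card α} : ℝ) ≤
      2 ^ (4 * ε * logb 2 (1 / ε) * Fintype.card α) := by
  have hL : 1 ≤ log (1 / ε) := by
    rw [le_log_iff_exp_le (by positivity), le_div_iff₀ hε]
    nlinarith [exp_one_lt_d9]
  calc 2 * (#{U : Finset α | (#U : ℝ) ≤ 2 * ε * Fintype.card α} : ℝ)
      ≤ exp (log 2 + (2 * ε * Fintype.card α * log (1 / ε) + ε * Fintype.card α)) := by
        rw [exp_add, exp_log two_pos]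
        gcongr
        exact card_card_le_le_exp_log hε (by linarith) _
    _ ≤ exp (4 * ε * Fintype.card α * log (1 / ε)) := by
        gcongr
        have hεnL := mul_le_mul_of_nonneg_left hL (by linarith : 0 ≤ ε * Fintype.card α)
        nlinarith [log_two_lt_d9]
    _ = _ := by
        rw [rpow_def_of_pos two_pos, logb]
        field_simp

variable (K α) in
theorem exists_rank_le_card_ne_finsetHadamard_le_rpow {ε : ℝ} (hε : 0 < ε) (hε₁ : ε ≤ 1 / 4)
    (hεn : 1 ≤ ε * Fintype.card α) :
    ∃ N : Matrix (Finset α) (Finset α) K,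
      (N.rank : ℝ) ≤ 5 * Fintype.card α *
        2 ^ ((Fintype.card α : ℝ) - 1 / 32 * ε ^ 2 * Fintype.card α) ∧
      ∀ S, (#{T | N S T ≠ finsetHadamard K α S T} : ℝ) ≤
        2 ^ (4 * ε * Real.logb 2 (1 / ε) * Fintype.card α) := by
  obtain ⟨N, hrank, hrow⟩ := exists_rank_le_card_ne_finsetHadamard_le K α hε
  refine ⟨N, ?_, fun S => ?_⟩
  · calc (N.rank : ℝ) ≤ #{U : Finset α | #U ≤ ⌊(1 / 2 - ε) * Fintype.card α⌋₊} +
          2 * #{S : Finset α | ¬IsBalanced (ε / 8) S} := by exact_mod_cast hrank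
      _ ≤ 5 * 2 ^ ((Fintype.card α : ℝ) - 1 / 32 * ε ^ 2 * Fintype.card α) :=
        card_card_le_floor_add_two_mul_card_not_isBalanced_le hε (by linarith)
      _ ≤ _ := by gcongr; nlinarith
  · refine le_trans ?_ (two_mul_card_card_le_le_rpow hε hε₁ hεn)
    exact_mod_cast hrow S

end

def boolFunEquivFinset (α : Type*) [Fintype α] : (α → Bool) ≃ Finset α where
  toFun x := {i | x i}
  invFun S i := decide (i ∈ S)
  left_inv x := by ext i; simp
  right_inv S := by ext i; simp

theorem Had_eq_submatrix (K : Type) [Field K] (n : ℕ) :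
    Had K n =
      (finsetHadamard K (Fin n)).submatrix (boolFunEquivFinset _) (boolFunEquivFinset _) := by
  ext x y
  simp only [Had, ip, finsetHadamard, boolFunEquivFinset, Matrix.of_apply, Matrix.submatrix_apply,
    Equiv.coe_fn_mk, filter_and]
  convert rfl

/-- Strong non-rigidity of Hadamard matrices: few modifications per row suffice. -/
theorem hadamard_not_rigid_rowwise :
    ∃ c₁ c₂ ε₀ : ℝ, 0 < c₁ ∧ 0 < c₂ ∧ 0 < ε₀ ∧
      ∀ (K : Type) [Field K], ∀ ε : ℝ, 0 < ε → ε < ε₀ →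
        ∃ n₀ : ℕ, ∀ n : ℕ, n₀ ≤ n →
          ∃ M' : Matrix (Fin n → Bool) (Fin n → Bool) K,
            (M'.rank : ℝ) ≤ 5 * n * 2 ^ ((n : ℝ) - c₁ * ε ^ 2 * n) ∧
            ∀ x : Fin n → Bool,
              (Nat.card {y : Fin n → Bool // M' x y ≠ Had K n x y} : ℝ) ≤
                2 ^ (c₂ * ε * Real.logb 2 (1 / ε) * n) := by
  refine ⟨1 / 32, 4, 1 / 4, by norm_num, by norm_num, by norm_num,
    fun K _ ε hε hε₀ => ⟨⌈1 / ε⌉₊, fun n hn => ?_⟩⟩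
  have hεn : 1 ≤ ε * Fintype.card (Fin n) := by
    rw [Fintype.card_fin, ← div_le_iff₀' hε]
    exact Nat.ceil_le.1 hn
  obtain ⟨N, hrank, hrow⟩ :=
    exists_rank_le_card_ne_finsetHadamard_le_rpow K (Fin n) hε hε₀.le hεn
  set e := boolFunEquivFinset (Fin n)
  refine ⟨N.submatrix e e, by simpa [Matrix.rank_submatrix] using hrank, fun x => ?_⟩
  have hcard : Nat.card {y // N.submatrix e e x y ≠ Had K n x y} =
      #{T | N (e x) T ≠ finsetHadamard K (Fin n) (e x) T} := by
    rw [Nat.card_congr (e.subtypeEquiv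
        (q := fun T => N (e x) T ≠ finsetHadamard K (Fin n) (e x) T)
        fun y => by rw [Had_eq_submatrix]; rfl),
      Nat.card_eq_fintype_card, Fintype.card_subtype]
  rw [hcard]
  simpa only [Fintype.card_fin] using hrow (e x)
end
end

section
/- There exists a constant c > 0 such that for every field K, every n ∈ ℕ, and every integer r with 2 ≤ r ≤ 2^{2n}, there exists a 2^n × 2^n matrix B over K with rank(B) ≤ (max(n/ln r, 2))^{c·√(n·log₂ r)} such that B differs from the Walsh–Hadamard matrix H_n (over K) in at most 2^{2n}/r entries. -/
open scoped Classical
open Finset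

noncomputable section

open Real

/-!
Over any field, `(-1) ^ k` agrees on a window of `d + 1` consecutive integers with a combination
`∑_{j ≤ d} c_j C(k, j)`: the matrix `(C(a + i, j))_{i, j ≤ d}` is invertible, because a combination
vanishing on the window has forward difference vanishing on a shorter window. As `C(⟨x, y⟩, j)`
counts the `j`-subsets of `x ∩ y`, the matrix `B(x, y) = ∑_j c_j C(⟨x, y⟩, j)` factors through the
subsets of size at most `d`, so its rank is at most `∑_{j ≤ d} C(n, j) ≤ (e n / d) ^ d`.
`B` agrees with `H_n` wherever `⟨x, y⟩` lies in the window, and `⟨x, y⟩` is a sum of `n` independent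
Bernoulli(1/4) variables; by a Chernoff bound it leaves `n / 4 ± t`, `t = √(n log 2r)`, for at most
`4 ^ n / r` pairs, so a window of length `d = ⌈2t⌉` suffices. When `n < 4 log 2r`, take `B = H_n`.
-/

theorem eq_zero_of_sum_choose_mul_eq_zero {R : Type*} [CommRing R] {a d : ℕ} {c : Fin (d + 1) → R}
    (h : ∀ i : Fin (d + 1), ∑ j : Fin (d + 1), ((a + i).choose j : R) * c j = 0) : c = 0 := by
  induction d with
  | zero => simpa [funext_iff, Fin.forall_fin_one] using h 0
  | succ d ih =>
    have htail : ∀ j : Fin (d + 1), c j.succ = 0 := congrFun <| ih fun i => by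
      have hsucc := h i.succ
      have hcast := h i.castSucc
      rw [Fin.sum_univ_succ] at hsucc hcast
      simp only [Fin.val_succ, Fin.val_castSucc, Fin.val_zero, ← add_assoc, Nat.choose_succ_succ',
        Nat.cast_add, add_mul, Finset.sum_add_distrib, Nat.choose_zero_right] at hsucc hcast
      linear_combination hsucc - hcast
    have h0 : c 0 = 0 := by simpa [Fin.sum_univ_succ, htail] using h 0
    ext j
    exact Fin.cases h0 htail j

theorem exists_sum_choose_mul_eq {K : Type*} [Field K] (a d : ℕ) (f : ℕ → K) :
    ∃ c : Fin (d + 1) → K,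
      ∀ k, a ≤ k → k ≤ a + d → ∑ j : Fin (d + 1), (k.choose j : K) * c j = f k := by
  set W : Matrix (Fin (d + 1)) (Fin (d + 1)) K := Matrix.of fun i j => ((a + i).choose j : K)
  have hW : Function.Injective W.mulVec := by
    refine (injective_iff_map_eq_zero' W.mulVecLin).2 fun c => ⟨fun hc => ?_, by simp_all⟩
    exact eq_zero_of_sum_choose_mul_eq_zero fun i => congrFun hc i
  obtain ⟨c, hc⟩ := Matrix.mulVec_surjective_iff_isUnit.2 (Matrix.mulVec_injective_iff_isUnit.1 hW)
    fun i : Fin (d + 1) => f (a + i)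
  refine ⟨c, fun k hak hkd => ?_⟩
  obtain ⟨i, rfl⟩ := Nat.exists_eq_add_of_le hak
  simpa [W, Matrix.mulVec, dotProduct] using congrFun hc ⟨i, by omega⟩

theorem sum_card_eq_boole_subset_eq_choose {α R : Type*} [Fintype α] [CommSemiring R]
    (T : Finset α) (j : ℕ) :
    ∑ s : {s : Finset α // #s = j}, (if s.1 ⊆ T then 1 else 0 : R) = (#T).choose j := by
  rw [← Finset.sum_subtype (powersetCard j univ) (fun s => mem_powersetCard_univ)
    (fun s => if s ⊆ T then (1 : R) else 0), Finset.sum_boole, ← Finset.card_powersetCard]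
  congr 2
  ext s
  simp only [mem_filter, mem_powersetCard, subset_univ, true_and]
  tauto

theorem rank_of_sum_choose_card_inter_mul_le {α m o R : Type*} [Fintype α] [DecidableEq α]
    [Fintype o] [CommRing R] [StrongRankCondition R] (X : m → Finset α) (Y : o → Finset α) {d : ℕ}
    (c : Fin (d + 1) → R) :
    (Matrix.of fun x y => ∑ j : Fin (d + 1), ((#(X x ∩ Y y)).choose j : R) * c j).rank ≤
      ∑ j : Fin (d + 1), (Fintype.card α).choose j := by
  let P : Matrix m ((j : Fin (d + 1)) × {s : Finset α // #s = j}) R :=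
    Matrix.of fun x s => if s.2.1 ⊆ X x then c s.1 else 0
  let Q : Matrix ((j : Fin (d + 1)) × {s : Finset α // #s = j}) o R :=
    Matrix.of fun s y => if s.2.1 ⊆ Y y then 1 else 0
  have hPQ :
      Matrix.of (fun x y => ∑ j : Fin (d + 1), ((#(X x ∩ Y y)).choose j : R) * c j) = P * Q := by
    ext x y
    rw [Matrix.of_apply, Matrix.mul_apply, Fintype.sum_sigma]
    refine Finset.sum_congr rfl fun j _ => ?_
    rw [← sum_card_eq_boole_subset_eq_choose, Finset.sum_mul]
    refine Finset.sum_congr rfl fun s _ => ?_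
    simp only [P, Q, Matrix.of_apply, Finset.subset_inter_iff]
    split_ifs <;> simp_all
  calc _ ≤ Fintype.card ((j : Fin (d + 1)) × {s : Finset α // #s = j}) :=
        hPQ ▸ (Matrix.rank_mul_le_left P Q).trans (Matrix.rank_le_card_width P)
    _ = _ := by simp [Fintype.card_sigma]

theorem pow_ip_eq_prod {R : Type*} [CommMonoid R] {n : ℕ} (z : R) (x y : Fin n → Bool) :
    z ^ ip x y = ∏ i, if x i ∧ y i then z else 1 := by
  rw [Finset.prod_ite, Finset.prod_const, Finset.prod_const_one, mul_one]
  rfl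

theorem sum_pow_ip {R : Type*} [CommSemiring R] (n : ℕ) (z : R) :
    ∑ p : (Fin n → Bool) × (Fin n → Bool), z ^ ip p.1 p.2 = (3 + z) ^ n := by
  let g : Bool → Bool → R := fun b b' => if b ∧ b' then z else 1
  calc ∑ p : (Fin n → Bool) × (Fin n → Bool), z ^ ip p.1 p.2
      = ∑ x : Fin n → Bool, ∑ y : Fin n → Bool, ∏ i, g (x i) (y i) := by
        simp only [Fintype.sum_prod_type, pow_ip_eq_prod, g]
    _ = ∏ _i : Fin n, ∑ b, ∑ b', g b b' := by
        simp only [Fintype.prod_sum]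
    _ = (3 + z) ^ n := by
        simp only [g, Fintype.sum_bool]
        norm_num
        ring

theorem three_add_exp_le {s : ℝ} (hs : |s| ≤ 1) : 3 + exp s ≤ 4 * exp (s / 4 + s ^ 2 / 4) := by
  have h1 := (abs_le.1 (abs_exp_sub_one_sub_id_le hs)).2
  have h2 := add_one_le_exp (s / 4 + s ^ 2 / 4)
  linarith

theorem sum_exp_mul_ip_sub_le (n : ℕ) {s : ℝ} (hs : |s| ≤ 1) :
    ∑ p : (Fin n → Bool) × (Fin n → Bool), exp (s * (ip p.1 p.2 - n / 4)) ≤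
      4 ^ n * exp (n * s ^ 2 / 4) := by
  have hsplit : ∀ k : ℕ, exp (s * (k - n / 4)) = exp (-(n * s / 4)) * exp s ^ k := by
    intro k
    rw [← exp_nat_mul, ← exp_add]
    ring_nf
  simp_rw [hsplit, ← Finset.mul_sum, sum_pow_ip]
  calc exp (-(n * s / 4)) * (3 + exp s) ^ n
      ≤ exp (-(n * s / 4)) * (4 * exp (s / 4 + s ^ 2 / 4)) ^ n := by
        gcongr
        exact three_add_exp_le hs
    _ = 4 ^ n * exp (n * s ^ 2 / 4) := by
        rw [mul_pow, ← exp_nat_mul, mul_left_comm, ← exp_add]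
        ring_nf

theorem card_ip_tail_le (n : ℕ) {t : ℝ} (ht : 0 ≤ t) (htn : 2 * t ≤ n) :
    (#{p : (Fin n → Bool) × (Fin n → Bool) | t ≤ |(ip p.1 p.2 : ℝ) - n / 4|} : ℝ) ≤
      2 * 4 ^ n * exp (-(t ^ 2 / n)) := by
  set X : (Fin n → Bool) × (Fin n → Bool) → ℝ := fun p => ip p.1 p.2 - n / 4
  set s : ℝ := 2 * t / n
  have hs0 : 0 ≤ s := by positivity
  have hs : |s| ≤ 1 := abs_le.2 ⟨by linarith, div_le_one_of_le₀ htn (Nat.cast_nonneg n)⟩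
  have hexp : n * s ^ 2 / 4 - s * t = -(t ^ 2 / n) := by
    rcases eq_or_ne (n : ℝ) 0 with hn | hn
    · simp [s, hn]
    · simp only [s]
      field_simp
      ring
  -- Markov's inequality for `exp (s X) + exp (-s X)`, which is at least `exp (s t)` where `t ≤ |X|`
  have hmarkov : (#{p | t ≤ |X p|} : ℝ) * exp (s * t) ≤
      ∑ p, (exp (s * X p) + exp (-s * X p)) := by
    rw [← nsmul_eq_mul, ← Finset.sum_const]
    refine (Finset.sum_le_sum fun p hp => ?_).trans
      (Finset.sum_le_sum_of_subset_of_nonneg (Finset.filter_subset _ _) fun p _ _ => by positivity)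
    have hp : t ≤ |X p| := (Finset.mem_filter.1 hp).2
    rcases le_total 0 (X p) with hX | hX
    · rw [abs_of_nonneg hX] at hp
      have := exp_le_exp.2 (mul_le_mul_of_nonneg_left hp hs0)
      linarith [exp_pos (-s * X p)]
    · rw [abs_of_nonpos hX] at hp
      have := exp_le_exp.2 (mul_le_mul_of_nonneg_left hp hs0)
      rw [show s * -X p = -s * X p by ring] at this
      linarith [exp_pos (s * X p)]
  have hsum : ∑ p, (exp (s * X p) + exp (-s * X p)) ≤ 2 * 4 ^ n * exp (n * s ^ 2 / 4) := by
    rw [Finset.sum_add_distrib]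
    have hpos := sum_exp_mul_ip_sub_le n hs
    have hneg := sum_exp_mul_ip_sub_le n (show |-s| ≤ 1 by rwa [abs_neg])
    rw [neg_sq] at hneg
    linarith
  rw [← hexp, exp_sub, ← mul_div_assoc, le_div_iff₀ (exp_pos _)]
  exact hmarkov.trans hsum

theorem sum_choose_le_exp_mul_div_pow {n d : ℕ} (hd : 0 < d) (hdn : d ≤ n) :
    ∑ j : Fin (d + 1), (n.choose j : ℝ) ≤ (exp 1 * n / d) ^ d := by
  have hn : 0 < n := hd.trans_le hdn
  set u : ℝ := d / n
  have hu0 : 0 < u := by positivity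
  have hu1 : u ≤ 1 := div_le_one_of_le₀ (by exact_mod_cast hdn) (Nat.cast_nonneg n)
  -- weight term `j` by `u ^ j / u ^ d ≥ 1`, then complete the binomial expansion of `(u + 1) ^ n`
  calc ∑ j : Fin (d + 1), (n.choose j : ℝ)
      = ∑ j ∈ range (d + 1), (n.choose j : ℝ) :=
        Fin.sum_univ_eq_sum_range (fun j => (n.choose j : ℝ)) _
    _ ≤ ∑ j ∈ range (d + 1), u ^ j * 1 ^ (n - j) * n.choose j / u ^ d := by
        refine Finset.sum_le_sum fun j hj => ?_
        rw [one_pow, mul_one, mul_comm, mul_div_assoc]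
        refine le_mul_of_one_le_right (Nat.cast_nonneg _) ?_
        rw [one_le_div (by positivity)]
        exact pow_le_pow_of_le_one hu0.le hu1 (Nat.lt_succ_iff.1 (mem_range.1 hj))
    _ ≤ ∑ j ∈ range (n + 1), u ^ j * 1 ^ (n - j) * n.choose j / u ^ d :=
        Finset.sum_le_sum_of_subset_of_nonneg (range_subset_range.2 (by omega))
          fun _ _ _ => by positivity
    _ = (u + 1) ^ n / u ^ d := by rw [← Finset.sum_div, add_pow]
    _ ≤ exp u ^ n / u ^ d := by
        gcongr
        linarith [add_one_le_exp u]
    _ = (exp 1 * n / d) ^ d := by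
        rw [← exp_nat_mul, div_pow, div_pow, mul_pow, ← exp_nat_mul]
        simp only [u]
        field_simp

theorem ip_eq_card_inter {n : ℕ} (x y : Fin n → Bool) :
    ip x y = #(({i | x i} : Finset (Fin n)) ∩ ({i | y i} : Finset (Fin n))) := by
  rw [ip, Finset.filter_and]

theorem exists_rank_le_eq_had_of_mem_Icc (K : Type) [Field K] (n a d : ℕ) :
    ∃ B : Matrix (Fin n → Bool) (Fin n → Bool) K, B.rank ≤ ∑ j : Fin (d + 1), n.choose j ∧
      ∀ x y, ip x y ∈ Icc a (a + d) → B x y = Had K n x y := by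
  obtain ⟨c, hc⟩ := exists_sum_choose_mul_eq a d fun k => (-1 : K) ^ k
  refine ⟨Matrix.of fun x y => ∑ j : Fin (d + 1), ((ip x y).choose j : K) * c j, ?_,
    fun x y hxy => ?_⟩
  · simp_rw [ip_eq_card_inter]
    simpa using rank_of_sum_choose_card_inter_mul_le (fun x : Fin n → Bool => {i | x i})
      (fun y : Fin n → Bool => {i | y i}) c
  · obtain ⟨ha, had⟩ := Finset.mem_Icc.1 hxy
    exact hc _ ha had

theorem diffCount_le_card_filter_not {K : Type} [Field K] {n : ℕ}
    {A B : Matrix (Fin n → Bool) (Fin n → Bool) K} (P : (Fin n → Bool) × (Fin n → Bool) → Prop)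
    (h : ∀ p, P p → A p.1 p.2 = B p.1 p.2) : diffCount A B ≤ #{p | ¬P p} := by
  rw [diffCount, Nat.card_eq_fintype_card, Fintype.card_subtype]
  refine Finset.card_le_card fun p hp => ?_
  simp only [mem_filter, mem_univ, true_and] at hp ⊢
  exact fun hP => hp (h p hP)

theorem le_max_two_of_sq_le_two_mul {y z : ℝ} (hz : 0 ≤ z) (h : z ^ 2 ≤ 2 * y) : z ≤ max y 2 := by
  rcases le_total z 2 with hz2 | hz2
  · exact le_max_of_le_right hz2
  · exact le_max_of_le_left (by nlinarith)

theorem exists_rank_le_diffCount_le_of_two_mul_le (K : Type) [Field K] {n : ℕ} {t : ℝ} (ht : 0 < t)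
    (htn : 2 * t ≤ n) :
    ∃ B : Matrix (Fin n → Bool) (Fin n → Bool) K,
      (B.rank : ℝ) ≤ (exp 1 * n / ⌈2 * t⌉₊) ^ ⌈2 * t⌉₊ ∧
      (diffCount B (Had K n) : ℝ) ≤ 2 * 4 ^ n * exp (-(t ^ 2 / n)) := by
  set d := ⌈2 * t⌉₊
  set a := ⌈n / 4 - t⌉₊
  obtain ⟨B, hrank, hB⟩ := exists_rank_le_eq_had_of_mem_Icc K n a d
  refine ⟨B, ?_, ?_⟩
  · have hd : 0 < d := Nat.ceil_pos.2 (by positivity)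
    calc (B.rank : ℝ) ≤ ∑ j : Fin (d + 1), (n.choose j : ℝ) := by exact_mod_cast hrank
      _ ≤ _ := sum_choose_le_exp_mul_div_pow hd (Nat.ceil_le.2 htn)
  · have hwindow : ∀ p : (Fin n → Bool) × (Fin n → Bool), |(ip p.1 p.2 : ℝ) - n / 4| < t →
        ip p.1 p.2 ∈ Icc a (a + d) := by
      intro p hp
      rw [abs_sub_lt_iff] at hp
      have hd : 2 * t ≤ d := Nat.le_ceil _
      have ha : n / 4 - t ≤ a := Nat.le_ceil _
      refine Finset.mem_Icc.2 ⟨Nat.ceil_le.2 (by linarith), ?_⟩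
      exact_mod_cast (show (ip p.1 p.2 : ℝ) ≤ a + d by linarith)
    calc (diffCount B (Had K n) : ℝ)
        ≤ #{p : (Fin n → Bool) × (Fin n → Bool) | t ≤ |(ip p.1 p.2 : ℝ) - n / 4|} := by
          have := diffCount_le_card_filter_not (A := B) (B := Had K n)
            (fun p => |(ip p.1 p.2 : ℝ) - n / 4| < t) fun p hp => hB _ _ (hwindow p hp)
          simp only [not_lt] at this
          exact_mod_cast this
      _ ≤ _ := card_ip_tail_le n ht.le htn

theorem exists_rank_le_diffCount_le (K : Type) [Field K] (n : ℕ) {ρ : ℝ} (hρ : 0 < ρ) :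
    ∃ (B : Matrix (Fin n → Bool) (Fin n → Bool) K) (m : ℕ), (m : ℝ) ≤ 2 * √(n * ρ) + 1 ∧
      (B.rank : ℝ) ≤ max (n / ρ) 2 ^ m ∧ (diffCount B (Had K n) : ℝ) ≤ 2 * 4 ^ n * exp (-ρ) := by
  by_cases hρn : 4 * ρ ≤ n
  · set t := √(n * ρ)
    have hnρ : 0 ≤ (n : ℝ) * ρ := by positivity
    have ht : 0 < t := sqrt_pos.2 (by nlinarith)
    have ht2 : t ^ 2 = n * ρ := sq_sqrt hnρ
    have htn : 2 * t ≤ n := by nlinarith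
    obtain ⟨B, hrank, hdiff⟩ := exists_rank_le_diffCount_le_of_two_mul_le K ht htn
    refine ⟨B, ⌈2 * t⌉₊, (Nat.ceil_lt_add_one (by positivity)).le, hrank.trans ?_, ?_⟩
    · have hd : 2 * t ≤ ⌈2 * t⌉₊ := Nat.le_ceil _
      have he : exp 1 ^ 2 ≤ 8 := by nlinarith [exp_one_lt_d9, exp_pos 1]
      gcongr
      refine le_max_two_of_sq_le_two_mul (by positivity) ?_
      have hd2 : 4 * (n * ρ) ≤ (⌈2 * t⌉₊ : ℝ) ^ 2 := by nlinarith
      rw [div_pow, div_le_iff₀ (by nlinarith), mul_pow]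
      calc exp 1 ^ 2 * (n : ℝ) ^ 2 ≤ 2 * (n / ρ) * (4 * (n * ρ)) := by
            field_simp
            nlinarith
        _ ≤ 2 * (n / ρ) * (⌈2 * t⌉₊ : ℝ) ^ 2 := by gcongr
    · have hn : (n : ℝ) ≠ 0 := by linarith
      rwa [ht2, mul_div_cancel_left₀ ρ hn] at hdiff
  · refine ⟨Had K n, n, ?_, ?_, ?_⟩
    · have : (n : ℝ) / 2 ≤ √(n * ρ) := le_sqrt_of_sq_le (by nlinarith)
      linarith
    · calc ((Had K n).rank : ℝ) ≤ 2 ^ n := by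
            exact_mod_cast (Matrix.rank_le_card_width _).trans_eq (by simp)
        _ ≤ _ := by gcongr; exact le_max_right _ _
    · have : diffCount (Had K n) (Had K n) = 0 := by simp [diffCount]
      rw [this, Nat.cast_zero]
      positivity

theorem two_mul_sqrt_mul_log_two_mul_add_one_le {n r : ℕ} (hn : 1 ≤ n) (hr : 2 ≤ r) :
    2 * √(n * log (2 * r)) + 1 ≤ 4 * √(n * logb 2 r) := by
  have hr' : (2 : ℝ) ≤ r := by exact_mod_cast hr
  have hn' : (1 : ℝ) ≤ n := by exact_mod_cast hn
  have hq : 1 ≤ logb 2 r := by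
    rwa [le_logb_iff_rpow_le one_lt_two (by linarith), rpow_one]
  have hlog : log (2 * r) ≤ 2 * logb 2 r := by
    have hlog2r : log 2 ≤ log r := log_le_log two_pos hr'
    rw [log_mul two_ne_zero (by linarith), logb, mul_div_assoc', le_div_iff₀ (by positivity)]
    nlinarith [log_pos one_lt_two, log_two_lt_d9]
  have hL : 1 ≤ √(n * logb 2 r) := one_le_sqrt.2 (one_le_mul_of_one_le_of_one_le hn' hq)
  have h : √(n * log (2 * r)) ≤ 3 / 2 * √(n * logb 2 r) := by
    rw [sqrt_le_left (by positivity), mul_pow, sq_sqrt (by positivity)]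
    nlinarith
  linarith

/-- Non-rigidity of Hadamard matrices, part II (high-error regime). -/
theorem hadamard_not_rigid_high_error :
    ∃ c : ℝ, 0 < c ∧
      ∀ (K : Type) [Field K], ∀ n : ℕ, ∀ r : ℕ, 2 ≤ r → r ≤ 2 ^ (2 * n) →
        ∃ B : Matrix (Fin n → Bool) (Fin n → Bool) K,
          (B.rank : ℝ) ≤ (max ((n : ℝ) / Real.log r) 2) ^ (c * Real.sqrt (n * Real.logb 2 r)) ∧
          (diffCount B (Had K n) : ℝ) ≤ 2 ^ (2 * (n : ℝ)) / r := by
  refine ⟨4, four_pos, fun K _ n r hr hrn => ?_⟩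
  have hn : 1 ≤ n := Nat.one_le_iff_ne_zero.2 fun hn => by simp [hn] at hrn; omega
  have hr' : (2 : ℝ) ≤ r := by exact_mod_cast hr
  have hlogr : 0 < log r := log_pos (by linarith)
  have hlog2r : log r ≤ log (2 * r) := log_le_log (by linarith) (by linarith)
  obtain ⟨B, m, hm, hrank, hdiff⟩ := exists_rank_le_diffCount_le K n (hlogr.trans_le hlog2r)
  refine ⟨B, ?_, ?_⟩
  · calc (B.rank : ℝ) ≤ max ((n : ℝ) / log (2 * r)) 2 ^ m := hrank
      _ ≤ max ((n : ℝ) / log r) 2 ^ (m : ℝ) := by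
          rw [rpow_natCast]
          gcongr
      _ ≤ _ := rpow_le_rpow_of_exponent_le (le_max_of_le_right one_le_two)
          (hm.trans (two_mul_sqrt_mul_log_two_mul_add_one_le hn hr))
  · calc (diffCount B (Had K n) : ℝ) ≤ 2 * 4 ^ n * exp (-log (2 * r)) := hdiff
      _ = 2 ^ (2 * (n : ℝ)) / r := by
          rw [exp_neg, exp_log (by positivity), mul_comm (2 : ℝ), rpow_mul two_pos.le]
          norm_num
          field_simp
end
end

section
/- For every field K, every n ∈ ℕ, every r ∈ ℕ, and every ε ∈ [0,1]: there exists a 2^n × 2^n matrix B over K with rank(B) ≤ r differing from the Walsh–Hadamard matrix H_n (over K) in at most ε·4^n entries if and only if H_n has ε-probabilistic rank at most r over K. -/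
open scoped Classical
open Finset

noncomputable section

variable {K : Type} [Field K] {n : ℕ}

def bx {n : ℕ} (a : Fin n → Bool) : (Fin n → Bool) ≃ (Fin n → Bool) where
  toFun x := fun i => xor (x i) (a i)
  invFun x := fun i => xor (x i) (a i)
  left_inv x := by funext i; simp
  right_inv x := by funext i; simp

@[simp] lemma Had_apply (x y : Fin n → Bool) : Had K n x y = (-1:K) ^ ip x y := rfl

lemma pow_ip (x y : Fin n → Bool) :
    ((-1:K) ^ ip x y) = ∏ i, (if x i ∧ y i then (-1:K) else 1) := by
  rw [ip, ← Finset.prod_const, Finset.prod_filter]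

lemma bx_comm (a x : Fin n → Bool) : bx a x = bx x a := by
  funext i; exact Bool.xor_comm _ _

lemma had_identity (a b x y : Fin n → Bool) :
    Had K n x y =
      ((-1:K) ^ ip x b) * Had K n (bx a x) (bx b y) *
        ((-1:K) ^ ip a y * (-1:K) ^ ip a b) := by
  simp only [Had_apply, pow_ip]
  rw [← Finset.prod_mul_distrib, ← Finset.prod_mul_distrib, ← Finset.prod_mul_distrib]
  refine (Finset.prod_congr rfl fun i _ => ?_)
  simp only [bx, Equiv.coe_fn_mk]
  rcases Bool.dichotomy (x i) with hx|hx <;> rcases Bool.dichotomy (a i) with ha|ha <;>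
    rcases Bool.dichotomy (y i) with hy|hy <;> rcases Bool.dichotomy (b i) with hb|hb <;>
    simp [hx, ha, hy, hb] <;> norm_num

def Mab (B : Matrix (Fin n → Bool) (Fin n → Bool) K) (a b : Fin n → Bool) :
    Matrix (Fin n → Bool) (Fin n → Bool) K :=
  Matrix.diagonal (fun x => (-1:K) ^ ip x b) * (B.submatrix (bx a) (bx b)) *
    Matrix.diagonal (fun y => (-1:K) ^ ip a y * (-1:K) ^ ip a b)

lemma Mab_apply (B : Matrix (Fin n → Bool) (Fin n → Bool) K) (a b x y : Fin n → Bool) :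
    Mab B a b x y = ((-1:K) ^ ip x b) * B (bx a x) (bx b y) *
      ((-1:K) ^ ip a y * (-1:K) ^ ip a b) := by
  simp [Mab, Matrix.mul_diagonal, Matrix.diagonal_mul, Matrix.submatrix_apply, mul_assoc]

lemma Mab_rank {r : ℕ} (B : Matrix (Fin n → Bool) (Fin n → Bool) K) (a b : Fin n → Bool)
    (h : B.rank ≤ r) : (Mab B a b).rank ≤ r := by
  calc (Mab B a b).rank ≤ (Matrix.diagonal (fun x => (-1:K) ^ ip x b) *
        (B.submatrix (bx a) (bx b))).rank := Matrix.rank_mul_le_left _ _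
    _ ≤ (B.submatrix (bx a) (bx b)).rank := Matrix.rank_mul_le_right _ _
    _ = B.rank := Matrix.rank_submatrix B (bx a) (bx b)
    _ ≤ r := h

lemma Mab_eq_iff (B : Matrix (Fin n → Bool) (Fin n → Bool) K) (a b x y : Fin n → Bool) :
    Mab B a b x y = Had K n x y ↔ B (bx a x) (bx b y) = Had K n (bx a x) (bx b y) := by
  have h1 : ((-1:K) ^ ip x b) ≠ 0 := pow_ne_zero _ (by simp)
  have h3 : ((-1:K) ^ ip a y * (-1:K) ^ ip a b) ≠ 0 :=
    mul_ne_zero (pow_ne_zero _ (by simp)) (pow_ne_zero _ (by simp))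
  rw [Mab_apply, had_identity a b x y]
  constructor
  · intro h; exact mul_left_cancel₀ h1 (mul_right_cancel₀ h3 h)
  · intro h; rw [h]

lemma diffCount_eq (A B : Matrix (Fin n → Bool) (Fin n → Bool) K) :
    diffCount A B =
      (Finset.univ.filter fun p : (Fin n → Bool) × (Fin n → Bool) =>
        A p.1 p.2 ≠ B p.1 p.2).card := by
  rw [diffCount, Nat.card_eq_fintype_card, Fintype.card_subtype]

lemma card_pairs : Fintype.card ((Fin n → Bool) × (Fin n → Bool)) = 4 ^ n := by
  simp [Fintype.card_prod, ← mul_pow]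

lemma diffCount_cast (A B : Matrix (Fin n → Bool) (Fin n → Bool) K) :
    (diffCount A B : ℝ) =
      ∑ p : (Fin n → Bool) × (Fin n → Bool),
        (if A p.1 p.2 ≠ B p.1 p.2 then (1:ℝ) else 0) := by
  rw [diffCount_eq, Finset.card_filter]
  push_cast
  rfl

lemma forward_dir {r : ℕ} {ε : ℝ} (B : Matrix (Fin n → Bool) (Fin n → Bool) K)
    (hr : B.rank ≤ r) (hd : (diffCount B (Had K n) : ℝ) ≤ ε * 4 ^ n) :
    ProbRankLE (Had K n) ε r := by
  set f : (Fin n → Bool) × (Fin n → Bool) → Matrix (Fin n → Bool) (Fin n → Bool) K :=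
    fun p => Mab B p.1 p.2 with hf
  refine ⟨Finset.univ.image f,
    fun M => ((Finset.univ.filter fun p => f p = M).card : ℝ) / 4 ^ n, ?_, ?_, ?_, ?_⟩
  · intro M _; positivity
  · rw [← Finset.sum_div, div_eq_one_iff_eq (by positivity)]
    rw [← Nat.cast_sum, ← Finset.card_eq_sum_card_image f Finset.univ]
    rw [Finset.card_univ, card_pairs]
    push_cast; ring
  · rintro M hM
    obtain ⟨p, -, rfl⟩ := Finset.mem_image.mp hM
    exact_mod_cast Mab_rank B p.1 p.2 hr
  · intro x y
    have key : ∑ M ∈ Finset.univ.image f,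
        (if M x y = Had K n x y then ((Finset.univ.filter fun p => f p = M).card : ℕ) else 0)
        = (Finset.univ.filter fun p : (Fin n → Bool) × (Fin n → Bool) =>
            f p x y = Had K n x y).card := by
      rw [Finset.card_eq_sum_card_fiberwise
        (f := f) (t := Finset.univ.image f)
        (fun p _ => Finset.mem_image_of_mem f (Finset.mem_univ p))]
      refine (Finset.sum_congr rfl fun M hM => ?_)
      by_cases h : M x y = Had K n x y
      · rw [if_pos h]
        congr 1
        ext p
        simp only [Finset.mem_filter, Finset.mem_univ, true_and]
        constructor
        · intro h2; exact ⟨by rw [h2]; exact h, h2⟩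
        · rintro ⟨-, h2⟩; exact h2
      · rw [if_neg h]
        symm
        rw [Finset.card_eq_zero, Finset.eq_empty_iff_forall_notMem]
        intro p hp
        simp only [Finset.mem_filter, Finset.mem_univ, true_and] at hp
        exact h (hp.2 ▸ hp.1)
    have hcard : ((Finset.univ.filter fun p : (Fin n → Bool) × (Fin n → Bool) =>
        f p x y = Had K n x y).card : ℝ) ≥ (1 - ε) * 4 ^ n := by
      have hsplit := Finset.card_filter_add_card_filter_not
        (s := (Finset.univ : Finset ((Fin n → Bool) × (Fin n → Bool))))
        (p := fun p => f p x y = Had K n x y)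
      have hneg : (Finset.univ.filter fun p : (Fin n → Bool) × (Fin n → Bool) =>
          ¬ (f p x y = Had K n x y)).card = diffCount B (Had K n) := by
        rw [diffCount_eq]
        apply Finset.card_equiv (Equiv.prodCongr (bx x) (bx y))
        intro p
        simp only [Finset.mem_filter, Finset.mem_univ, true_and, Equiv.prodCongr_apply,
          Prod.map]
        rw [hf]
        rw [Mab_eq_iff B p.1 p.2 x y, bx_comm p.1 x, bx_comm p.2 y]
      rw [Finset.card_univ, card_pairs] at hsplit
      have h4 : ((Finset.univ.filter fun p : (Fin n → Bool) × (Fin n → Bool) =>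
          f p x y = Had K n x y).card : ℝ) = 4 ^ n - diffCount B (Had K n) := by
        rw [← hneg]
        have := congrArg (fun m : ℕ => (m : ℝ)) hsplit
        push_cast at this ⊢
        linarith
      rw [h4]
      linarith
    calc (1:ℝ) - ε = ((1 - ε) * 4 ^ n) / 4 ^ n := by field_simp
      _ ≤ ((Finset.univ.filter fun p : (Fin n → Bool) × (Fin n → Bool) =>
            f p x y = Had K n x y).card : ℝ) / 4 ^ n := by
          exact (div_le_div_iff_of_pos_right (by positivity : (0:ℝ) < 4 ^ n)).mpr hcard
      _ = ∑ M ∈ Finset.univ.image f,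
            (if M x y = Had K n x y then
              ((Finset.univ.filter fun p => f p = M).card : ℝ) / 4 ^ n else 0) := by
          rw [← key]
          push_cast
          rw [Finset.sum_div]
          refine (Finset.sum_congr rfl fun M _ => ?_)
          split_ifs <;> simp

lemma reverse_dir {r : ℕ} {ε : ℝ} (hprob : ProbRankLE (Had K n) ε r) :
    ∃ B : Matrix (Fin n → Bool) (Fin n → Bool) K,
      B.rank ≤ r ∧ (diffCount B (Had K n) : ℝ) ≤ ε * 4 ^ n := by
  obtain ⟨s, w, hw0, hw1, hrank, hagree⟩ := hprob
  -- support is nonempty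
  set T := s.filter (fun M => 0 < w M) with hT
  have hTne : T.Nonempty := by
    by_contra hne
    rw [Finset.not_nonempty_iff_eq_empty] at hne
    have : ∑ M ∈ s, w M = 0 := by
      apply Finset.sum_eq_zero
      intro M hM
      by_contra h0
      have : 0 < w M := lt_of_le_of_ne (hw0 M hM) (Ne.symm h0)
      have : M ∈ T := Finset.mem_filter.mpr ⟨hM, this⟩
      simp [hne] at this
    rw [hw1] at this; norm_num at this
  obtain ⟨M, hMT, hMmin⟩ := Finset.exists_min_image T
    (fun M => diffCount M (Had K n)) hTne
  have hMs : M ∈ s := (Finset.mem_filter.mp hMT).1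
  refine ⟨M, ?_, ?_⟩
  · exact_mod_cast hrank M hMs
  -- expected diff bound
  have hexp : ∑ M' ∈ s, w M' * (diffCount M' (Had K n) : ℝ) ≤ ε * 4 ^ n := by
    have hswap : ∑ M' ∈ s, w M' * (diffCount M' (Had K n) : ℝ)
        = ∑ p : (Fin n → Bool) × (Fin n → Bool),
            ∑ M' ∈ s, (if M' p.1 p.2 ≠ Had K n p.1 p.2 then w M' else 0) := by
      rw [Finset.sum_comm]
      refine (Finset.sum_congr rfl fun M' _ => ?_)
      rw [diffCount_cast, Finset.mul_sum]
      refine (Finset.sum_congr rfl fun p _ => ?_)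
      split_ifs <;> simp
    rw [hswap]
    have hper : ∀ p : (Fin n → Bool) × (Fin n → Bool),
        ∑ M' ∈ s, (if M' p.1 p.2 ≠ Had K n p.1 p.2 then w M' else 0) ≤ ε := by
      intro p
      have h1 : ∑ M' ∈ s, (if M' p.1 p.2 = Had K n p.1 p.2 then w M' else 0)
          + ∑ M' ∈ s, (if M' p.1 p.2 ≠ Had K n p.1 p.2 then w M' else 0) = 1 := by
        rw [← hw1, ← Finset.sum_add_distrib]
        refine (Finset.sum_congr rfl fun M' _ => ?_)
        split_ifs with h h2 <;> simp_all
      have h2 := hagree p.1 p.2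
      linarith
    calc ∑ p : (Fin n → Bool) × (Fin n → Bool),
          ∑ M' ∈ s, (if M' p.1 p.2 ≠ Had K n p.1 p.2 then w M' else 0)
        ≤ ∑ _p : (Fin n → Bool) × (Fin n → Bool), ε :=
          Finset.sum_le_sum fun p _ => hper p
      _ = ε * 4 ^ n := by
          rw [Finset.sum_const, Finset.card_univ, card_pairs]
          push_cast; ring
  -- minimal element bound
  have hmin : (diffCount M (Had K n) : ℝ) ≤ ∑ M' ∈ s, w M' * (diffCount M' (Had K n) : ℝ) := by
    have : (diffCount M (Had K n) : ℝ) = ∑ M' ∈ s, w M' * (diffCount M (Had K n) : ℝ) := by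
      rw [← Finset.sum_mul, hw1, one_mul]
    rw [this]
    refine Finset.sum_le_sum fun M' hM' => ?_
    by_cases hpos : 0 < w M'
    · have hM'T : M' ∈ T := Finset.mem_filter.mpr ⟨hM', hpos⟩
      have := hMmin M' hM'T
      exact mul_le_mul_of_nonneg_left (by exact_mod_cast this) (le_of_lt hpos)
    · have : w M' = 0 := le_antisymm (not_lt.mp hpos) (hw0 M' hM')
      simp [this]
  linarith


/-- Equivalence between rigidity and probabilistic rank of the Walsh-Hadamard matrix. -/
theorem hadamard_rigidity_iff_probRank :
    ∀ (K : Type) [Field K], ∀ n r : ℕ, ∀ ε : ℝ, 0 ≤ ε → ε ≤ 1 →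
      ((∃ B : Matrix (Fin n → Bool) (Fin n → Bool) K,
          B.rank ≤ r ∧ (diffCount B (Had K n) : ℝ) ≤ ε * 4 ^ n) ↔
        ProbRankLE (Had K n) ε r) := by
  intro K _ n r ε hε0 hε1
  constructor
  · rintro ⟨B, hr, hd⟩
    exact forward_dir B hr hd
  · exact reverse_dir
end
end

section
/- There is a constant c > 0 such that for every field K, every ε ∈ (0, 1/2), and every n ∈ ℕ, there is a multilinear polynomial p ∈ K[x₁,…,xₙ,y₁,…,yₙ] with at most 2^{n − c·ε²·n} monomials such that for all x,y ∈ {0,1}^n with 2εn ≤ ⟨x,y⟩ ≤ (1/2 + ε)n, one has p(x,y) = (−1)^{⟨x,y⟩} (the sign interpreted as an element of K). -/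
open scoped Classical
open Finset

noncomputable section

/-!
On Boolean points the multilinear polynomial `∑_{|S| = k} ∏_{i ∈ S} xᵢ yᵢ` takes the value
`C(⟨x, y⟩, k)`, so every combination `∑_{k ≤ d} a_k C(m, k)` is evaluated at `m = ⟨x, y⟩` by a
multilinear polynomial with at most `∑_{k ≤ d} C(n, k)` monomials. By Vandermonde's identity the
matrix `(C(L + i, k))_{i, k ≤ d}` is a product of two unitriangular matrices, so such combinations
interpolate any function, in particular `(-1)^m`, on the `d + 1` integers `L, …, L + d`. With
`L = ⌈2εn⌉` and `L + d = ⌊(1/2 + ε)n⌋` we have `d ≤ (1/2 - ε)n`, and the Chernoff bound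
`∑_{k ≤ (1/2 - ε)n} C(n, k) ≤ 2ⁿ e^{-2ε²n}` gives the sparsity.
-/

namespace Matrix

variable {R : Type*} [CommRing R]

theorem of_choose_add_eq_mul (L d : ℕ) :
    (of fun i k : Fin (d + 1) => ((L + i).choose k : R)) =
      (of fun i t : Fin (d + 1) => ((i : ℕ).choose t : R)) *
        of fun t k : Fin (d + 1) => if (t : ℕ) ≤ k then (L.choose (k - t) : R) else 0 := by
  ext i k
  have hk : range (k + 1) = (range (d + 1)).filter (· ≤ (k : ℕ)) := by
    ext t; simp only [mem_range, mem_filter]; omega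
  simp only [mul_apply, of_apply]
  rw [Fin.sum_univ_eq_sum_range (fun t => ((i : ℕ).choose t : R) *
    if t ≤ (k : ℕ) then (L.choose (k - t) : R) else 0)]
  simp only [mul_ite, mul_zero]
  rw [← sum_filter, ← hk, add_comm, Nat.add_choose_eq,
    Finset.Nat.sum_antidiagonal_eq_sum_range_succ_mk]
  push_cast
  rfl

theorem det_of_choose_add (L d : ℕ) :
    (of fun i k : Fin (d + 1) => ((L + i).choose k : R)).det = 1 := by
  have hlower : (of fun i t : Fin (d + 1) => ((i : ℕ).choose t : R)).det = 1 := by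
    rw [det_of_isLowerTriangular _ fun i t (h : i < t) => by
      simp [Nat.choose_eq_zero_of_lt (show (i : ℕ) < t from h)]]
    simp
  have hupper : (of fun t k : Fin (d + 1) =>
      if (t : ℕ) ≤ k then (L.choose (k - t) : R) else 0).det = 1 := by
    rw [det_of_isUpperTriangular fun t k (h : k < t) => by simp [not_le.2 h]]
    simp
  rw [of_choose_add_eq_mul, det_mul, hlower, hupper, one_mul]

end Matrix

theorem exists_sum_mul_choose_eq {R : Type*} [CommRing R] (L d : ℕ) (f : ℕ → R) :
    ∃ a : ℕ → R, ∀ m, L ≤ m → m ≤ L + d →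
      ∑ k ∈ range (d + 1), a k * (m.choose k : R) = f m := by
  set M : Matrix (Fin (d + 1)) (Fin (d + 1)) R := .of fun i k => ((L + i).choose k : R)
  have hM : IsUnit M := (Matrix.isUnit_iff_isUnit_det M).2 <| by
    rw [Matrix.det_of_choose_add]; exact isUnit_one
  obtain ⟨a, ha⟩ := Matrix.mulVec_surjective_iff_isUnit.2 hM fun i => f (L + i)
  refine ⟨fun k => if h : k < d + 1 then a ⟨k, h⟩ else 0, fun m hLm hmd => ?_⟩
  obtain ⟨i, rfl⟩ := Nat.exists_eq_add_of_le hLm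
  have := congrFun ha ⟨i, by omega⟩
  rw [← this, Matrix.mulVec, dotProduct, ← Fin.sum_univ_eq_sum_range]
  simp [M, mul_comm, Fin.is_le]

namespace MvPolynomial

variable {σ K : Type*} [CommSemiring K]

def pairExponent (S : Finset σ) : σ ⊕ σ →₀ ℕ :=
  ∑ i ∈ S, (Finsupp.single (.inl i) 1 + Finsupp.single (.inr i) 1)

theorem pairExponent_apply_le_one (S : Finset σ) (v : σ ⊕ σ) : pairExponent S v ≤ 1 := by
  rcases v with j | j <;>
  simp [pairExponent, Finsupp.finsetSum_apply, Finsupp.single_apply, apply_ite (· ≤ 1)]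

theorem eval_monomial_pairExponent (f : σ ⊕ σ → K) (S : Finset σ) (c : K) :
    eval f (monomial (pairExponent S) c) = c * ∏ i ∈ S, f (.inl i) * f (.inr i) := by
  simp [pairExponent, monomial_sum_index, monomial_add_single, ← X_pow_eq_monomial]

variable [Fintype σ]

def pairBinomialPoly (d : ℕ) (a : ℕ → K) : MvPolynomial (σ ⊕ σ) K :=
  ∑ k ∈ range (d + 1), ∑ S ∈ powersetCard k univ, monomial (pairExponent S) (a k)

theorem support_pairBinomialPoly_subset (d : ℕ) (a : ℕ → K) :
    (pairBinomialPoly d a : MvPolynomial (σ ⊕ σ) K).support ⊆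
      (range (d + 1)).biUnion fun k => (powersetCard k univ).image pairExponent := by
  intro m hm
  obtain ⟨k, hk, hm⟩ := mem_biUnion.1 (support_sum hm)
  obtain ⟨S, hS, hm⟩ := mem_biUnion.1 (support_sum hm)
  have hmS : m = pairExponent S := mem_singleton.1 (support_monomial_subset hm)
  exact mem_biUnion.2 ⟨k, hk, mem_image.2 ⟨S, hS, hmS.symm⟩⟩

theorem card_support_pairBinomialPoly_le (d : ℕ) (a : ℕ → K) :
    #(pairBinomialPoly d a : MvPolynomial (σ ⊕ σ) K).support ≤
      ∑ k ∈ range (d + 1), (Fintype.card σ).choose k := by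
  refine (card_le_card (support_pairBinomialPoly_subset d a)).trans <|
    card_biUnion_le.trans <| sum_le_sum fun k _ => ?_
  exact card_image_le.trans (card_powersetCard k univ).le

theorem le_one_of_mem_support_pairBinomialPoly (d : ℕ) (a : ℕ → K) {m : σ ⊕ σ →₀ ℕ}
    (hm : m ∈ (pairBinomialPoly d a).support) (v : σ ⊕ σ) : m v ≤ 1 := by
  obtain ⟨k, -, hk⟩ := mem_biUnion.1 (support_pairBinomialPoly_subset d a hm)
  obtain ⟨S, -, rfl⟩ := mem_image.1 hk
  exact pairExponent_apply_le_one S v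

theorem eval_monomial_pairExponent_bool (x y : σ → Bool) (S : Finset σ) (c : K) :
    eval (Sum.elim (fun i => if x i then (1 : K) else 0) (fun i => if y i then (1 : K) else 0))
        (monomial (pairExponent S) c) = if S ⊆ ({i | x i ∧ y i} : Finset σ) then c else 0 := by
  simp only [eval_monomial_pairExponent, Sum.elim_inl, Sum.elim_inr, ite_zero_mul_ite_zero,
    mul_one, prod_boole]
  simp [subset_iff]

theorem eval_pairBinomialPoly (d : ℕ) (a : ℕ → K) (x y : σ → Bool) :
    eval (Sum.elim (fun i => if x i then (1 : K) else 0) (fun i => if y i then (1 : K) else 0))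
        (pairBinomialPoly d a) =
      ∑ k ∈ range (d + 1), a k * ((#{i | x i ∧ y i}).choose k : K) := by
  simp only [pairBinomialPoly, map_sum, eval_monomial_pairExponent_bool]
  refine sum_congr rfl fun k _ => ?_
  rw [← sum_filter, sum_const, ← card_powersetCard, nsmul_eq_mul, mul_comm]
  congr 3
  ext S
  simp [mem_powersetCard, and_comm]

end MvPolynomial

open Real

theorem sum_range_choose_mul_pow_le (n d : ℕ) {r : ℝ} (hr0 : 0 ≤ r) (hr1 : r ≤ 1) :
    (∑ k ∈ range (d + 1), (n.choose k : ℝ)) * r ^ d ≤ (1 + r) ^ n := by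
  have hvanish : ∀ k ∈ range (d + 1), (n.choose k : ℝ) * r ^ k ≠ 0 → k < n + 1 := by
    intro k _ hk
    by_contra! hnk
    simp [Nat.choose_eq_zero_of_lt (Nat.succ_le_iff.1 hnk)] at hk
  calc (∑ k ∈ range (d + 1), (n.choose k : ℝ)) * r ^ d
      ≤ ∑ k ∈ range (d + 1), (n.choose k : ℝ) * r ^ k := by
        rw [sum_mul]
        exact sum_le_sum fun k hk => mul_le_mul_of_nonneg_left
          (pow_le_pow_of_le_one hr0 hr1 (Nat.lt_succ_iff.1 (mem_range.1 hk))) (by positivity)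
    _ = ∑ k ∈ range (d + 1) with k < n + 1, (n.choose k : ℝ) * r ^ k :=
        (sum_filter_of_ne hvanish).symm
    _ ≤ ∑ k ∈ range (n + 1), (n.choose k : ℝ) * r ^ k :=
        sum_le_sum_of_subset_of_nonneg (fun k hk => mem_range.2 (mem_filter.1 hk).2)
          fun _ _ _ => by positivity
    _ = (1 + r) ^ n := by
        rw [add_comm 1 r, add_pow]
        simp [mul_comm]

theorem one_add_exp_neg_le (t : ℝ) : 1 + exp (-t) ≤ 2 * exp (-t / 2 + t ^ 2 / 8) := by
  have hcosh : 1 + exp (-t) = 2 * exp (-t / 2) * cosh (t / 2) := by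
    have h1 : exp (-t / 2) * exp (t / 2) = 1 := by rw [← exp_add]; ring_nf; exact exp_zero
    have h2 : exp (-t / 2) * exp (-(t / 2)) = exp (-t) := by rw [← exp_add]; ring_nf
    rw [cosh_eq]
    linear_combination -h1 - h2
  calc 1 + exp (-t) = 2 * exp (-t / 2) * cosh (t / 2) := hcosh
    _ ≤ 2 * exp (-t / 2) * exp ((t / 2) ^ 2 / 2) := by gcongr; exact cosh_le_exp_half_sq _
    _ = 2 * exp (-t / 2 + t ^ 2 / 8) := by rw [mul_assoc, ← exp_add]; ring_nf

theorem sum_range_choose_le_exp (n d : ℕ) {ε : ℝ} (hε : 0 ≤ ε)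
    (hd : (d : ℝ) ≤ (1 / 2 - ε) * n) :
    ∑ k ∈ range (d + 1), (n.choose k : ℝ) ≤ 2 ^ n * exp (-2 * ε ^ 2 * n) := by
  -- `t = 4ε` minimises the exponent `t² / 8 - εt` of the bound obtained with `r = e^{-t}`.
  set r := exp (-(4 * ε))
  have hrd : exp (-(2 * ε - 4 * ε ^ 2) * n) ≤ r ^ d := by
    rw [← exp_nat_mul, exp_le_exp]
    nlinarith
  have hpow : (1 + r) ^ n ≤ 2 ^ n * exp (-(2 * ε - 2 * ε ^ 2) * n) :=
    calc (1 + r) ^ n ≤ (2 * exp (-(4 * ε) / 2 + (4 * ε) ^ 2 / 8)) ^ n :=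
          pow_le_pow_left₀ (by positivity) (one_add_exp_neg_le _) n
      _ = 2 ^ n * exp (-(2 * ε - 2 * ε ^ 2) * n) := by rw [mul_pow, ← exp_nat_mul]; ring_nf
  have hsum := (mul_le_mul_of_nonneg_left hrd (by positivity)).trans <|
    (sum_range_choose_mul_pow_le n d (exp_pos _).le (exp_le_one_iff.2 (by linarith))).trans hpow
  calc ∑ k ∈ range (d + 1), (n.choose k : ℝ)
      = (∑ k ∈ range (d + 1), (n.choose k : ℝ)) * exp (-(2 * ε - 4 * ε ^ 2) * n) /
          exp (-(2 * ε - 4 * ε ^ 2) * n) := (mul_div_cancel_right₀ _ (exp_pos _).ne').symm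
    _ ≤ 2 ^ n * exp (-(2 * ε - 2 * ε ^ 2) * n) / exp (-(2 * ε - 4 * ε ^ 2) * n) := by gcongr
    _ = 2 ^ n * exp (-2 * ε ^ 2 * n) := by rw [mul_div_assoc, ← exp_sub]; ring_nf

theorem two_pow_mul_exp_neg_le_rpow (n : ℕ) {s : ℝ} (hs : 0 ≤ s) :
    2 ^ n * exp (-2 * s) ≤ 2 ^ ((n : ℝ) - s) := by
  rw [rpow_sub two_pos, rpow_natCast, div_eq_mul_inv]
  gcongr
  rw [rpow_def_of_pos two_pos, ← exp_neg, exp_le_exp]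
  nlinarith [log_two_lt_d9]

/-- Lemma 3.1 (IP2-polynomial): a sparse multilinear polynomial computing
    (-1)^{⟨x,y⟩} on all Boolean points with inner product in the middle range. -/
theorem sparse_multilinear_for_IP2 :
    ∃ c : ℝ, 0 < c ∧
      ∀ (K : Type) [Field K], ∀ ε : ℝ, 0 < ε → ε < 1 / 2 → ∀ n : ℕ,
        ∃ p : MvPolynomial (Fin n ⊕ Fin n) K,
          (∀ m ∈ p.support, ∀ v, m v ≤ 1) ∧
          (p.support.card : ℝ) ≤ 2 ^ ((n : ℝ) - c * ε ^ 2 * n) ∧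
          ∀ x y : Fin n → Bool,
            2 * ε * n ≤ (ip x y : ℝ) → (ip x y : ℝ) ≤ (1 / 2 + ε) * n →
            MvPolynomial.eval
              (Sum.elim (fun i => if x i then (1 : K) else 0)
                        (fun i => if y i then (1 : K) else 0)) p
              = (-1 : K) ^ ip x y := by
  refine ⟨1, one_pos, fun K _ ε hε0 hε n => ?_⟩
  set L := ⌈2 * ε * n⌉₊
  set H := ⌊(1 / 2 + ε) * n⌋₊
  obtain ⟨a, ha⟩ := exists_sum_mul_choose_eq L (H - L) fun m => (-1 : K) ^ m
  have hd : ((H - L : ℕ) : ℝ) ≤ (1 / 2 - ε) * n := by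
    rcases le_total L H with hLH | hHL
    · have hH : (H : ℝ) ≤ (1 / 2 + ε) * n := Nat.floor_le (by positivity)
      have hL : 2 * ε * n ≤ (L : ℝ) := Nat.le_ceil _
      rw [Nat.cast_sub hLH]
      linarith
    · rw [Nat.sub_eq_zero_of_le hHL, Nat.cast_zero]
      exact mul_nonneg (by linarith) n.cast_nonneg
  refine ⟨MvPolynomial.pairBinomialPoly (H - L) a,
    fun m hm => MvPolynomial.le_one_of_mem_support_pairBinomialPoly _ _ hm, ?_,
    fun x y hlo hhi => ?_⟩
  · calc (#(MvPolynomial.pairBinomialPoly (H - L) a).support : ℝ)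
        ≤ ∑ k ∈ range (H - L + 1), (n.choose k : ℝ) := by
          exact_mod_cast Fintype.card_fin n ▸ MvPolynomial.card_support_pairBinomialPoly_le _ a
      _ ≤ 2 ^ n * exp (-2 * ε ^ 2 * n) := sum_range_choose_le_exp n (H - L) hε0.le hd
      _ ≤ 2 ^ ((n : ℝ) - 1 * ε ^ 2 * n) := by
          rw [one_mul, mul_assoc]
          exact two_pow_mul_exp_neg_le_rpow n (by positivity)
  · have hLm : L ≤ ip x y := Nat.ceil_le.2 hlo
    have hmH : ip x y ≤ H := Nat.le_floor hhi
    rw [MvPolynomial.eval_pairBinomialPoly]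
    exact ha (ip x y) hLm (by omega)
end
end

section
/- There is a constant c > 0 such that the following holds for every field K, every n ∈ ℕ, every a ∈ (0, 1/2), every 2^n × 2^n matrix T over K with rows and columns indexed by {0,1}^n, and every 2^n × 2^n matrix M over K of rank r: there exists a 2^n × 2^n matrix M' over K of rank at most r + 4n·2^{n − c·a²·n} such that M'(x,y) = T(x,y) for all x,y ∈ {0,1}^n satisfying at least one of the following: |x| ∉ [(1/2 − a)n, (1/2 + a)n], or |y| ∉ [(1/2 − a)n, (1/2 + a)n], or M(x,y) = T(x,y). -/
/-
Rows and columns indexed by unbalanced points are simply overwritten with `T`: for diagonal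
0/1 projections `P`, `Q` onto the bad rows and columns, `M + P (T - M) + (1 - P) (T - M) Q`
agrees with `T` on them and with `M` elsewhere, at a rank cost of `rank P + rank Q`.
The number of unbalanced points is bounded by a Chernoff argument: the exponential moment
`∑ₓ exp (s (n - 2|x|)) = (2 cosh s)ⁿ ≤ 2ⁿ exp (n s² / 2)` taken at `s = 2a` shows that at most
`2 · 2ⁿ · exp (-2a²n)` points satisfy `|n - 2|x|| > 2an`, which gives the constant `c = 2`.
-/

open scoped Classical
open Finset

noncomputable section

open Real

theorem Matrix.rank_add_le_s9 {m n K : Type*} [Fintype m] [Fintype n] [Field K]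
    (A B : Matrix m n K) : (A + B).rank ≤ A.rank + B.rank := by
  have h : LinearMap.range (A + B).mulVecLin ≤
      LinearMap.range A.mulVecLin ⊔ LinearMap.range B.mulVecLin := by
    rw [Matrix.mulVecLin_add]
    exact LinearMap.range_add_le _ _
  exact (Submodule.finrank_mono h).trans (Submodule.finrank_add_le_finrank_add_finrank _ _)

theorem Matrix.rank_diagonal_indicator_le {m K : Type*} [Fintype m] [DecidableEq m] [Field K]
    (s : Finset m) : (Matrix.diagonal fun i => if i ∈ s then (1 : K) else 0).rank ≤ #s := by
  rw [Matrix.rank_diagonal, Fintype.card_subtype]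
  apply Finset.card_le_card
  intro i
  simp

theorem Matrix.exists_rank_le_add_card_add_card_eq_on_rows_cols {m n K : Type*}
    [Fintype m] [Fintype n] [DecidableEq m] [DecidableEq n] [Field K]
    (T M : Matrix m n K) (s : Finset m) (t : Finset n) :
    ∃ M' : Matrix m n K, M'.rank ≤ M.rank + #s + #t ∧
      ∀ x y, (x ∈ s ∨ y ∈ t ∨ M x y = T x y) → M' x y = T x y := by
  set P : Matrix m m K := Matrix.diagonal fun i => if i ∈ s then 1 else 0 with hP
  set Q : Matrix n n K := Matrix.diagonal fun j => if j ∈ t then 1 else 0 with hQ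
  refine ⟨M + P * (T - M) + (1 - P) * (T - M) * Q, ?_, fun x y h => ?_⟩
  · have hPs : P.rank ≤ #s := Matrix.rank_diagonal_indicator_le s
    have hQt : Q.rank ≤ #t := Matrix.rank_diagonal_indicator_le t
    calc _ ≤ M.rank + (P * (T - M)).rank + ((1 - P) * (T - M) * Q).rank :=
          (Matrix.rank_add_le_s9 _ _).trans (Nat.add_le_add_right (Matrix.rank_add_le_s9 _ _) _)
      _ ≤ M.rank + P.rank + Q.rank :=
          Nat.add_le_add (Nat.add_le_add_left (Matrix.rank_mul_le_left _ _) _)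
            (Matrix.rank_mul_le_right _ _)
      _ ≤ M.rank + #s + #t := by omega
  · have hP1 : 1 - P = Matrix.diagonal fun i => if i ∈ s then 0 else 1 := by
      rw [hP, ← Matrix.diagonal_one, Matrix.diagonal_sub]
      congr 1; funext i; split_ifs <;> simp
    rw [hP1, hP, hQ, Matrix.add_apply, Matrix.add_apply, Matrix.mul_diagonal, Matrix.diagonal_mul,
      Matrix.diagonal_mul, Matrix.sub_apply]
    by_cases hx : x ∈ s
    · simp only [hx, if_true]; ring
    by_cases hy : y ∈ t
    · simp only [hx, hy, if_true, if_false]; ring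
    simp only [hx, hy, if_false, (h.resolve_left hx).resolve_left hy]; ring

theorem cast_sub_two_mul_wt_eq_sum {n : ℕ} (x : Fin n → Bool) :
    (n : ℝ) - 2 * wt x = ∑ i, if x i then -1 else 1 := by
  have hn : (n : ℝ) = ∑ _i : Fin n, 1 := by simp
  rw [hn, wt, Finset.card_filter, Nat.cast_sum, Finset.mul_sum, ← Finset.sum_sub_distrib]
  refine Finset.sum_congr rfl fun i _ => ?_
  cases x i <;> norm_num

theorem sum_exp_mul_sub_two_mul_wt (n : ℕ) (s : ℝ) :
    ∑ x : Fin n → Bool, exp (s * (n - 2 * wt x)) = (2 * cosh s) ^ n := by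
  have hBool : ∑ b : Bool, exp (s * if b then -1 else 1) = 2 * cosh s := by
    simp only [Fintype.sum_bool, if_true, Bool.false_eq_true, if_false, cosh_eq, mul_neg_one,
      mul_one]
    ring
  simp_rw [cast_sub_two_mul_wt_eq_sum, Finset.mul_sum, exp_sum, ← hBool, Fintype.sum_pow]

def unbalanced (n : ℕ) (a : ℝ) : Finset (Fin n → Bool) :=
  {x | ¬((1 / 2 - a) * n ≤ (wt x : ℝ) ∧ (wt x : ℝ) ≤ (1 / 2 + a) * n)}

theorem mem_unbalanced_iff {n : ℕ} {a : ℝ} {x : Fin n → Bool} :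
    x ∈ unbalanced n a ↔ 2 * a * n < |(n : ℝ) - 2 * wt x| := by
  rw [unbalanced, Finset.mem_filter, lt_abs, not_and_or, not_le, not_le]
  simp only [Finset.mem_univ, true_and]
  exact or_congr ⟨fun h => by linarith, fun h => by linarith⟩
    ⟨fun h => by linarith, fun h => by linarith⟩

theorem card_unbalanced_mul_exp_le (n : ℕ) (a : ℝ) {s : ℝ} (hs : 0 ≤ s) :
    #(unbalanced n a) * exp (2 * a * s * n) ≤ 2 * (2 * cosh s) ^ n := by
  have hx : ∀ x ∈ unbalanced n a,
      exp (2 * a * s * n) ≤ exp (s * (n - 2 * wt x)) + exp (-s * (n - 2 * wt x)) := by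
    intro x hx
    calc exp (2 * a * s * n) ≤ exp |s * (n - 2 * wt x)| := by
          rw [abs_mul, abs_of_nonneg hs, exp_le_exp]
          nlinarith [mem_unbalanced_iff.1 hx]
      _ ≤ _ := by simpa only [neg_mul] using exp_abs_le (s * (n - 2 * wt x))
  calc #(unbalanced n a) * exp (2 * a * s * n)
      = ∑ _x ∈ unbalanced n a, exp (2 * a * s * n) := by rw [Finset.sum_const, nsmul_eq_mul]
    _ ≤ ∑ x ∈ unbalanced n a, (exp (s * (n - 2 * wt x)) + exp (-s * (n - 2 * wt x))) :=
        Finset.sum_le_sum hx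
    _ ≤ ∑ x, (exp (s * (n - 2 * wt x)) + exp (-s * (n - 2 * wt x))) :=
        Finset.sum_le_sum_of_subset_of_nonneg (Finset.subset_univ _) fun _ _ _ => by positivity
    _ = 2 * (2 * cosh s) ^ n := by
        rw [Finset.sum_add_distrib, sum_exp_mul_sub_two_mul_wt, sum_exp_mul_sub_two_mul_wt,
          cosh_neg]
        ring

theorem card_unbalanced_le (n : ℕ) {a : ℝ} (ha : 0 ≤ a) :
    (#(unbalanced n a) : ℝ) ≤ 2 * 2 ^ n * exp (-2 * a ^ 2 * n) := by
  have hcosh : (2 * cosh (2 * a)) ^ n ≤ 2 ^ n * exp (2 * a ^ 2 * n) := by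
    rw [mul_comm _ (n : ℝ), exp_nat_mul, ← mul_pow]
    gcongr
    exact (cosh_le_exp_half_sq _).trans_eq (by ring_nf)
  have h := card_unbalanced_mul_exp_le n a (mul_nonneg zero_le_two ha)
  rw [← le_div_iff₀ (exp_pos _)] at h
  calc (#(unbalanced n a) : ℝ) ≤ 2 * (2 * cosh (2 * a)) ^ n / exp (2 * a * (2 * a) * n) := h
    _ ≤ 2 * (2 ^ n * exp (2 * a ^ 2 * n)) / exp (2 * a * (2 * a) * n) := by gcongr
    _ = 2 * 2 ^ n * exp (-2 * a ^ 2 * n) := by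
        rw [mul_assoc, mul_div_assoc, mul_div_assoc, ← exp_sub, ← mul_assoc]
        congr 2
        ring

theorem two_mul_card_unbalanced_le (n : ℕ) {a : ℝ} (ha : 0 ≤ a) :
    2 * (#(unbalanced n a) : ℝ) ≤ 4 * n * 2 ^ ((n : ℝ) - 2 * a ^ 2 * n) := by
  rcases Nat.eq_zero_or_pos n with rfl | hn
  · have h0 : unbalanced 0 a = ∅ := Finset.eq_empty_of_forall_notMem fun x hx => by
      rw [mem_unbalanced_iff, cast_sub_two_mul_wt_eq_sum] at hx
      simp at hx
    simp [h0]
  have hexp : exp (-2 * a ^ 2 * n) ≤ 2 ^ (-(2 * a ^ 2 * n)) := by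
    rw [rpow_def_of_pos two_pos, exp_le_exp]
    have : 0 ≤ 2 * a ^ 2 * n := by positivity
    nlinarith [log_two_lt_d9]
  calc 2 * (#(unbalanced n a) : ℝ) ≤ 4 * 1 * 2 ^ n * exp (-2 * a ^ 2 * n) := by
        linarith [card_unbalanced_le n ha]
    _ ≤ 4 * n * 2 ^ n * 2 ^ (-(2 * a ^ 2 * n)) := by
        gcongr
        exact_mod_cast hn
    _ = 4 * n * 2 ^ ((n : ℝ) - 2 * a ^ 2 * n) := by
        rw [sub_eq_add_neg, rpow_add two_pos, rpow_natCast, mul_assoc _ (2 ^ n)]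

/-- Corollary correct-WH: correcting unbalanced rows/columns of an approximating matrix. -/
theorem correct_unbalanced_rows_cols :
    ∃ c : ℝ, 0 < c ∧
      ∀ (K : Type) [Field K], ∀ n : ℕ, ∀ a : ℝ, 0 < a → a < 1 / 2 →
        ∀ T M : Matrix (Fin n → Bool) (Fin n → Bool) K,
          ∃ M' : Matrix (Fin n → Bool) (Fin n → Bool) K,
            (M'.rank : ℝ) ≤ (M.rank : ℝ) + 4 * n * 2 ^ ((n : ℝ) - c * a ^ 2 * n) ∧
            ∀ x y : Fin n → Bool,
              (¬ ((1 / 2 - a) * n ≤ (wt x : ℝ) ∧ (wt x : ℝ) ≤ (1 / 2 + a) * n) ∨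
               ¬ ((1 / 2 - a) * n ≤ (wt y : ℝ) ∧ (wt y : ℝ) ≤ (1 / 2 + a) * n) ∨
               M x y = T x y) →
              M' x y = T x y := by
  refine ⟨2, two_pos, fun K _ n a ha _ T M => ?_⟩
  obtain ⟨M', hrank, hM'⟩ :=
    Matrix.exists_rank_le_add_card_add_card_eq_on_rows_cols T M (unbalanced n a) (unbalanced n a)
  refine ⟨M', ?_, fun x y h => hM' x y (by simpa [unbalanced] using h)⟩
  calc (M'.rank : ℝ) ≤ M.rank + #(unbalanced n a) + #(unbalanced n a) := by exact_mod_cast hrank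
    _ ≤ _ := by linarith [two_mul_card_unbalanced_le n ha.le]
end
end

section
/- Let K be a field and f : {0,1}^n × {0,1}^n → K. Suppose there is a finitely supported probability distribution P on polynomials in K[x₁,…,xₙ,y₁,…,yₙ], each with at most m monomials, such that for every x,y ∈ {0,1}^n, Pr_{p∼P}[p(x,y) = f(x,y)] ≥ 1 − ε. Then there exists a 2^n × 2^n matrix B over K with rank(B) ≤ m that differs from the truth table matrix M_f in at most ε·2^{2n} entries. -/
open scoped Classical
open Finset

noncomputable section

lemma rank_eval_le {K : Type} [Field K] {n : ℕ} (p : MvPolynomial (Fin n ⊕ Fin n) K) :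
    (Matrix.of fun x y : Fin n → Bool =>
      MvPolynomial.eval (Sum.elim (fun i => if x i then (1 : K) else 0)
        (fun i => if y i then (1 : K) else 0)) p).rank ≤ p.support.card := by
  set A : Matrix (Fin n → Bool) {d // d ∈ p.support} K := fun x d =>
    MvPolynomial.coeff (d : (Fin n ⊕ Fin n) →₀ ℕ) p *
      ∏ i : Fin n, (if x i then (1 : K) else 0) ^ (d : (Fin n ⊕ Fin n) →₀ ℕ) (Sum.inl i)
    with hA
  set B : Matrix {d // d ∈ p.support} (Fin n → Bool) K := fun d y =>
    ∏ i : Fin n, (if y i then (1 : K) else 0) ^ (d : (Fin n ⊕ Fin n) →₀ ℕ) (Sum.inr i)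
    with hB
  have hM : (Matrix.of fun x y : Fin n → Bool =>
      MvPolynomial.eval (Sum.elim (fun i => if x i then (1 : K) else 0)
        (fun i => if y i then (1 : K) else 0)) p) = A * B := by
    ext x y
    simp only [Matrix.of_apply, Matrix.mul_apply, hA, hB]
    rw [MvPolynomial.eval_eq', ← Finset.sum_coe_sort p.support]
    refine Finset.sum_congr rfl fun d _ => ?_
    rw [Fintype.prod_sum_type]
    simp only [Sum.elim_inl, Sum.elim_inr]
    ring
  rw [hM]
  calc (A * B).rank ≤ A.rank := Matrix.rank_mul_le_left A B
    _ ≤ Fintype.card {d // d ∈ p.support} := Matrix.rank_le_card_width A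
    _ = p.support.card := Fintype.card_coe _

/-- Corollary poly-to-rigid: sparse probabilistic polynomials give rigidity upper bounds. -/
theorem rigidity_le_of_probabilistic_polynomial
    (K : Type) [Field K] (n m : ℕ) (ε : ℝ)
    (f : (Fin n → Bool) → (Fin n → Bool) → K)
    (s : Finset (MvPolynomial (Fin n ⊕ Fin n) K))
    (w : MvPolynomial (Fin n ⊕ Fin n) K → ℝ)
    (hw : ∀ p ∈ s, 0 ≤ w p) (hsum : (∑ p ∈ s, w p) = 1)
    (hmono : ∀ p ∈ s, p.support.card ≤ m)
    (herr : ∀ x y : Fin n → Bool,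
      1 - ε ≤ ∑ p ∈ s,
        (if MvPolynomial.eval
              (Sum.elim (fun i => if x i then (1 : K) else 0)
                        (fun i => if y i then (1 : K) else 0)) p = f x y
         then w p else 0)) :
    ∃ B : Matrix (Fin n → Bool) (Fin n → Bool) K,
      B.rank ≤ m ∧ (diffCount B (Matrix.of f) : ℝ) ≤ ε * 2 ^ (2 * n) := by
  set ev : MvPolynomial (Fin n ⊕ Fin n) K → (Fin n → Bool) → (Fin n → Bool) → K :=
    fun p x y => MvPolynomial.eval (Sum.elim (fun i => if x i then (1 : K) else 0)
      (fun i => if y i then (1 : K) else 0)) p with hev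
  set E : MvPolynomial (Fin n ⊕ Fin n) K → ℕ := fun p =>
    (Finset.univ.filter fun q : (Fin n → Bool) × (Fin n → Bool) =>
      ev p q.1 q.2 ≠ f q.1 q.2).card with hE
  -- cardinality of the pair space
  have hcard : (Fintype.card ((Fin n → Bool) × (Fin n → Bool))) = 2 ^ (2 * n) := by
    simp [Fintype.card_prod, two_mul, pow_add]
  -- key averaging inequality
  have key : ∑ p ∈ s, w p * (E p : ℝ) ≤ ε * 2 ^ (2 * n) := by
    have h1 : ∀ p, w p * (E p : ℝ) =
        ∑ q : (Fin n → Bool) × (Fin n → Bool),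
          (if ev p q.1 q.2 ≠ f q.1 q.2 then w p else 0) := by
      intro p
      rw [← Finset.sum_filter, Finset.sum_const, nsmul_eq_mul, mul_comm, hE]
    calc ∑ p ∈ s, w p * (E p : ℝ)
        = ∑ p ∈ s, ∑ q : (Fin n → Bool) × (Fin n → Bool),
            (if ev p q.1 q.2 ≠ f q.1 q.2 then w p else 0) := by
          exact Finset.sum_congr rfl fun p _ => h1 p
      _ = ∑ q : (Fin n → Bool) × (Fin n → Bool), ∑ p ∈ s,
            (if ev p q.1 q.2 ≠ f q.1 q.2 then w p else 0) := Finset.sum_comm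
      _ ≤ ∑ _q : (Fin n → Bool) × (Fin n → Bool), ε := by
          refine Finset.sum_le_sum fun q _ => ?_
          have hsplit : ∑ p ∈ s, (if ev p q.1 q.2 ≠ f q.1 q.2 then w p else 0) =
              (∑ p ∈ s, w p) - ∑ p ∈ s, (if ev p q.1 q.2 = f q.1 q.2 then w p else 0) := by
            rw [← Finset.sum_sub_distrib]
            refine Finset.sum_congr rfl fun p _ => ?_
            by_cases h : ev p q.1 q.2 = f q.1 q.2 <;> simp [h]
          rw [hsplit, hsum]
          have := herr q.1 q.2
          linarith
      _ = ε * 2 ^ (2 * n) := by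
          rw [Finset.sum_const, nsmul_eq_mul, Finset.card_univ, hcard, mul_comm]
          push_cast
          ring
  -- pick a minimizer among polynomials of positive weight
  set s' : Finset (MvPolynomial (Fin n ⊕ Fin n) K) := s.filter (fun p => w p ≠ 0) with hs'
  have hsum' : ∑ p ∈ s', w p = 1 := by
    rw [hs', Finset.sum_filter_of_ne (fun p _ h => h), hsum]
  have hs'ne : s'.Nonempty := by
    rcases Finset.eq_empty_or_nonempty s' with h | h
    · exfalso; rw [h, Finset.sum_empty] at hsum'; norm_num at hsum'
    · exact h
  obtain ⟨p₀, hp₀s', hp₀min⟩ := Finset.exists_min_image s' E hs'ne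
  have hp₀s : p₀ ∈ s := (Finset.mem_filter.mp hp₀s').1
  -- E p₀ ≤ ε * 2^(2n)
  have hsum_eq : ∑ p ∈ s, w p * (E p : ℝ) = ∑ p ∈ s', w p * (E p : ℝ) := by
    rw [hs', Finset.sum_filter_of_ne]
    intro p _ h hw0
    rw [hw0, zero_mul] at h
    exact h rfl
  have hEp₀ : (E p₀ : ℝ) ≤ ε * 2 ^ (2 * n) := by
    have h2 : (E p₀ : ℝ) = ∑ p ∈ s', w p * (E p₀ : ℝ) := by
      rw [← Finset.sum_mul, hsum', one_mul]
    have h3 : ∑ p ∈ s', w p * (E p₀ : ℝ) ≤ ∑ p ∈ s', w p * (E p : ℝ) := by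
      refine Finset.sum_le_sum fun p hp => ?_
      have hwp : 0 ≤ w p := hw p (Finset.mem_filter.mp hp).1
      have := hp₀min p hp
      exact mul_le_mul_of_nonneg_left (by exact_mod_cast this) hwp
    rw [h2]
    calc ∑ p ∈ s', w p * (E p₀ : ℝ) ≤ ∑ p ∈ s', w p * (E p : ℝ) := h3
      _ = ∑ p ∈ s, w p * (E p : ℝ) := hsum_eq.symm
      _ ≤ ε * 2 ^ (2 * n) := key
  refine ⟨Matrix.of (ev p₀), ?_, ?_⟩
  · exact le_trans (rank_eval_le p₀) (hmono p₀ hp₀s)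
  · have hdc : diffCount (Matrix.of (ev p₀)) (Matrix.of f) = E p₀ := by
      rw [diffCount, Nat.card_eq_fintype_card, Fintype.card_subtype, hE]
      rfl
    rw [hdc]
    exact hEp₀
end
end

section
/- For every field K, every n ∈ ℕ, and every ε ∈ (0,1), the 2^n × 2^n matrix M_EQ over K, with rows and columns indexed by {0,1}^n and defined by M_EQ(x,y) = 1 if x = y and M_EQ(x,y) = 0 otherwise (i.e., the 2^n × 2^n identity matrix), has ε-probabilistic rank at most 2/ε over K. -/
open scoped Classical
open Finset

noncomputable section

/-- Counting functions with a prescribed collision: at most `|β|^(|α|-1)` of them. -/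
lemma card_filter_collision_le {α β : Type*} [Fintype α] [DecidableEq α]
    [Fintype β] [DecidableEq β] {x y : α} (hxy : x ≠ y) :
    (Finset.univ.filter fun h : α → β => h x = h y).card
      ≤ (Fintype.card β) ^ (Fintype.card α - 1) := by
  classical
  have hcard : Fintype.card {a : α // a ≠ y} = Fintype.card α - 1 := by
    have := Fintype.card_subtype_compl (fun a : α => a = y)
    simpa [Fintype.card_subtype_eq] using this
  have hle := Finset.card_le_card_of_injOn
    (s := Finset.univ.filter fun h : α → β => h x = h y)
    (t := (Finset.univ : Finset ({a : α // a ≠ y} → β)))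
    (fun h : α → β => fun a : {a : α // a ≠ y} => h a)
    (fun _ _ => Finset.mem_univ _) ?_
  · calc (Finset.univ.filter fun h : α → β => h x = h y).card
        ≤ (Finset.univ : Finset ({a : α // a ≠ y} → β)).card := hle
      _ = (Fintype.card β) ^ (Fintype.card α - 1) := by
          rw [Finset.card_univ, Fintype.card_fun, hcard]
  · intro h1 hm1 h2 hm2 hfe
    simp only [Finset.coe_filter, Set.mem_setOf_eq, Finset.mem_univ, true_and] at hm1 hm2
    funext a
    by_cases ha : a = y
    · subst ha
      have hx1 : h1 x = h2 x := congrFun hfe ⟨x, hxy⟩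
      rw [← hm1, ← hm2, hx1]
    · exact congrFun hfe ⟨a, ha⟩

/-- The equality (identity) matrix has low probabilistic rank. -/
theorem eq_matrix_probRank (K : Type) [Field K] (n : ℕ) (ε : ℝ)
    (hε : 0 < ε) (hε' : ε < 1) :
    ProbRankLE (Matrix.of fun x y : Fin n → Bool => if x = y then (1 : K) else 0)
      ε (2 / ε) := by
  classical
  set A : Matrix (Fin n → Bool) (Fin n → Bool) K :=
    Matrix.of fun x y : Fin n → Bool => if x = y then (1 : K) else 0 with hA
  set k : ℕ := ⌊2 / ε⌋₊ with hkdef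
  have h2ε : (2 : ℝ) ≤ 2 / ε := by
    rw [le_div_iff₀ hε]; nlinarith
  have hk2 : 2 ≤ k := Nat.le_floor (by exact_mod_cast h2ε)
  have hk0 : (0 : ℝ) < (k : ℝ) := by
    have : 0 < k := by omega
    exact_mod_cast this
  have hkle : (k : ℝ) ≤ 2 / ε := Nat.floor_le (by positivity)
  have hinv : 1 / (k : ℝ) < ε := by
    have h1 : 2 / ε - 1 < (k : ℝ) := Nat.sub_one_lt_floor (2 / ε)
    have h3 : (2 : ℝ) / ε = 2 * (1 / ε) := by ring
    have hu : (1 : ℝ) ≤ 1 / ε := by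
      rw [le_div_iff₀ hε]; linarith
    have h2 : 1 / ε < (k : ℝ) := by rw [h3] at h1; linarith
    rw [div_lt_iff₀ hk0]
    rw [div_lt_iff₀ hε] at h2
    linarith
  set N : ℕ := Fintype.card (Fin n → Bool) with hN
  have hN1 : 1 ≤ N := Fintype.card_pos
  set c : ℝ := ((Fintype.card ((Fin n → Bool) → Fin k)) : ℝ) with hc
  have hcval : c = (k : ℝ) ^ N := by
    rw [hc, Fintype.card_fun, Fintype.card_fin]
    push_cast
    rfl
  have hc0 : 0 < c := by rw [hcval]; positivity
  set Mh : ((Fin n → Bool) → Fin k) → Matrix (Fin n → Bool) (Fin n → Bool) K :=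
    fun h => Matrix.of fun x y => if h x = h y then (1 : K) else 0 with hMh
  refine ⟨Finset.image Mh Finset.univ,
    fun M => ((Finset.univ.filter fun h => Mh h = M).card : ℝ) / c, ?_, ?_, ?_, ?_⟩
  · intro M _
    positivity
  · rw [← Finset.sum_div, ← Nat.cast_sum, ← Finset.card_eq_sum_card_image Mh Finset.univ,
      Finset.card_univ, ← hc]
    exact div_self hc0.ne'
  · rintro M hM
    obtain ⟨h, -, rfl⟩ := Finset.mem_image.1 hM
    set P : Matrix (Fin n → Bool) (Fin k) K :=
      Matrix.of fun x c => if h x = c then 1 else 0 with hP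
    have hMP : Mh h = P * P.transpose := by
      ext x y
      simp only [hMh, Matrix.mul_apply, Matrix.transpose_apply, hP, Matrix.of_apply,
        ite_mul, one_mul, zero_mul]
      rw [Finset.sum_ite_eq]
      simp [eq_comm]
    have hrank : (Mh h).rank ≤ k := by
      rw [hMP]
      calc (P * P.transpose).rank ≤ P.rank := Matrix.rank_mul_le_left P P.transpose
        _ ≤ Fintype.card (Fin k) := Matrix.rank_le_card_width P
        _ = k := Fintype.card_fin k
    calc ((Mh h).rank : ℝ) ≤ (k : ℝ) := by exact_mod_cast hrank
      _ ≤ 2 / ε := hkle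
  · intro x y
    have key : ∑ M ∈ Finset.image Mh Finset.univ,
        (if M x y = A x y then ((Finset.univ.filter fun h => Mh h = M).card : ℝ) / c else 0)
        = ((Finset.univ.filter fun h => Mh h x y = A x y).card : ℝ) / c := by
      have hcomp := Finset.sum_comp (s := (Finset.univ : Finset ((Fin n → Bool) → Fin k)))
        (fun M : Matrix (Fin n → Bool) (Fin n → Bool) K =>
          if M x y = A x y then (1 : ℝ) / c else 0) Mh
      calc ∑ M ∈ Finset.image Mh Finset.univ,
            (if M x y = A x y then ((Finset.univ.filter fun h => Mh h = M).card : ℝ) / c else 0)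
          = ∑ M ∈ Finset.image Mh Finset.univ,
              ((Finset.univ.filter fun h => Mh h = M).card) •
                (if M x y = A x y then (1 : ℝ) / c else 0) := by
            refine Finset.sum_congr rfl fun M _ => ?_
            split <;> simp [nsmul_eq_mul, mul_one_div, div_eq_mul_inv]
        _ = ∑ h' ∈ Finset.univ, (if Mh h' x y = A x y then (1 : ℝ) / c else 0) := hcomp.symm
        _ = ((Finset.univ.filter fun h => Mh h x y = A x y).card : ℝ) / c := by
            rw [Finset.sum_ite, Finset.sum_const, Finset.sum_const_zero, add_zero,
              nsmul_eq_mul, mul_one_div]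
    rw [key]
    by_cases hxy : x = y
    · subst hxy
      have hfil : (Finset.univ.filter fun h : (Fin n → Bool) → Fin k => Mh h x x = A x x)
          = Finset.univ := by
        refine Finset.filter_true_of_mem fun h _ => ?_
        simp [hMh, hA]
      rw [hfil, Finset.card_univ, ← hc, div_self hc0.ne']
      linarith
    · have hAxy : A x y = 0 := by simp [hA, hxy]
      have hfil : (Finset.univ.filter fun h : (Fin n → Bool) → Fin k => Mh h x y = A x y)
          = Finset.univ.filter fun h : (Fin n → Bool) → Fin k => ¬ (h x = h y) := by
        refine Finset.filter_congr fun h _ => ?_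
        simp only [hMh, Matrix.of_apply, hAxy]
        constructor
        · intro he hc2
          rw [if_pos hc2] at he
          exact one_ne_zero he
        · intro hne
          rw [if_neg hne]
      rw [hfil]
      have hsum := Finset.card_filter_add_card_filter_not
        (s := (Finset.univ : Finset ((Fin n → Bool) → Fin k))) (p := fun h => h x = h y)
      set m := (Finset.univ.filter fun h : (Fin n → Bool) → Fin k => h x = h y).card with hm
      have hmle : (m : ℝ) ≤ (k : ℝ) ^ (N - 1) := by
        have hcoll := card_filter_collision_le (β := Fin k) hxy
        rw [Fintype.card_fin] at hcoll
        rw [← hm] at hcoll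
        calc (m : ℝ) ≤ ((k ^ (Fintype.card (Fin n → Bool) - 1) : ℕ) : ℝ) := by
              exact_mod_cast hcoll
          _ = (k : ℝ) ^ (N - 1) := by push_cast; rfl
      have hcard : ((Finset.univ.filter
          fun h : (Fin n → Bool) → Fin k => ¬ (h x = h y)).card : ℝ) = c - m := by
        have hnat : m + (Finset.univ.filter
            fun h : (Fin n → Bool) → Fin k => ¬ (h x = h y)).card
            = Fintype.card ((Fin n → Bool) → Fin k) := by
          rw [← Finset.card_univ]
          exact hsum
        have := congrArg (fun t : ℕ => (t : ℝ)) hnat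
        push_cast at this
        rw [hc]
        linarith
      rw [hcard]
      rw [sub_div, div_self hc0.ne']
      have hfrac : (m : ℝ) / c ≤ 1 / (k : ℝ) := by
        have hkpow : (k : ℝ) ^ N = (k : ℝ) ^ (N - 1) * k := by
          rw [← pow_succ]
          congr 1
          exact (Nat.succ_pred_eq_of_pos hN1).symm
        rw [hcval, hkpow, div_le_div_iff₀ (by positivity) hk0, one_mul]
        have := mul_le_mul_of_nonneg_right hmle hk0.le
        linarith
      linarith
end
end

section
/- There is a constant c > 0 such that for every field K, every n ≥ 1, and every ε ∈ (0,1), the 2^n × 2^n matrix M_LEQ over K, with rows and columns indexed by {0,1}^n and defined by M_LEQ(x,y) = 1 if the nonnegative integer with binary representation x is less than or equal to the one with binary representation y, and M_LEQ(x,y) = 0 otherwise, has ε-probabilistic rank at most c·n²/ε over K. -/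
open scoped Classical
open Finset

noncomputable section

def mskA {n : ℕ} (i : Fin n) (x : Fin n → Bool) : Fin n → Bool :=
  fun j => if (i:ℕ) < (j:ℕ) then x j else false

def bval {n : ℕ} (x : Fin n → Bool) : ℕ := ∑ i : Fin n, if x i then 2^(i:ℕ) else 0

lemma mskA_eq_iff {n : ℕ} (i : Fin n) (x y : Fin n → Bool) :
    mskA i x = mskA i y ↔ ∀ j : Fin n, (i:ℕ) < (j:ℕ) → x j = y j := by
  constructor
  · intro h j hj
    have := congrFun h j
    simpa [mskA, hj] using this
  · intro h
    funext j
    by_cases hj : (i:ℕ) < (j:ℕ) <;> simp [mskA, hj]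
    exact h j hj

lemma sum_range_two_pow (i : ℕ) : ∑ k ∈ Finset.range i, 2^k < 2^i := by
  induction i with
  | zero => simp
  | succ m ih => rw [Finset.sum_range_succ, pow_succ]; omega

lemma bval_lt {n : ℕ} {x y : Fin n → Bool} {i : Fin n}
    (hx : x i = false) (hy : y i = true)
    (hagree : ∀ j : Fin n, (i:ℕ) < (j:ℕ) → x j = y j) : bval x < bval y := by
  have hsplit : ∀ z : Fin n → Bool, bval z =
      (∑ j ∈ univ.filter (fun j : Fin n => (i:ℕ) < (j:ℕ)), if z j then 2^(j:ℕ) else 0)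
      + ∑ j ∈ univ.filter (fun j : Fin n => ¬ (i:ℕ) < (j:ℕ)), if z j then 2^(j:ℕ) else 0 := by
    intro z
    rw [Finset.sum_filter_add_sum_filter_not]
    rfl
  have hhigh : (∑ j ∈ univ.filter (fun j : Fin n => (i:ℕ) < (j:ℕ)), if x j then 2^(j:ℕ) else 0)
      = ∑ j ∈ univ.filter (fun j : Fin n => (i:ℕ) < (j:ℕ)), if y j then 2^(j:ℕ) else 0 := by
    apply Finset.sum_congr rfl
    intro j hj
    rw [hagree j (by simpa using hj)]
  have hlowx : (∑ j ∈ univ.filter (fun j : Fin n => ¬ (i:ℕ) < (j:ℕ)), if x j then 2^(j:ℕ) else 0)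
      < 2^(i:ℕ) := by
    calc (∑ j ∈ univ.filter (fun j : Fin n => ¬ (i:ℕ) < (j:ℕ)), if x j then 2^(j:ℕ) else 0)
        ≤ ∑ j ∈ univ.filter (fun j : Fin n => ¬ (i:ℕ) < (j:ℕ)),
            (if (j:ℕ) < (i:ℕ) then 2^(j:ℕ) else 0) := by
          apply Finset.sum_le_sum
          intro j hj
          simp only [mem_filter, mem_univ, true_and, not_lt] at hj
          rcases lt_or_eq_of_le hj with h | h
          · by_cases hxj : x j <;> simp [hxj, h]
          · have : j = i := Fin.ext h
            subst this
            simp [hx]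
      _ = ∑ j ∈ (univ.filter (fun j : Fin n => ¬ (i:ℕ) < (j:ℕ))).filter
            (fun j : Fin n => (j:ℕ) < (i:ℕ)), 2^(j:ℕ) := by
          exact (Finset.sum_filter _ _).symm
      _ = ∑ j ∈ univ.filter (fun j : Fin n => (j:ℕ) < (i:ℕ)), 2^(j:ℕ) := by
          congr 1
          rw [Finset.filter_filter]
          apply Finset.filter_congr
          intro j _
          constructor
          · exact fun h => h.2
          · exact fun h => ⟨by omega, h⟩
      _ = ∑ k ∈ (univ.filter (fun j : Fin n => (j:ℕ) < (i:ℕ))).image (fun j : Fin n => (j:ℕ)), 2^k := by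
          rw [Finset.sum_image]
          intro a _ b _ h
          exact Fin.ext h
      _ ≤ ∑ k ∈ Finset.range (i:ℕ), 2^k := by
          apply Finset.sum_le_sum_of_subset
          intro k hk
          simp only [mem_image, mem_filter, mem_univ, true_and] at hk
          obtain ⟨j, hj, rfl⟩ := hk
          simpa using hj
      _ < 2^(i:ℕ) := sum_range_two_pow _
  have hlowy : 2^(i:ℕ) ≤ ∑ j ∈ univ.filter (fun j : Fin n => ¬ (i:ℕ) < (j:ℕ)), if y j then 2^(j:ℕ) else 0 := by
    have hi : i ∈ univ.filter (fun j : Fin n => ¬ (i:ℕ) < (j:ℕ)) := by simp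
    calc (2:ℕ)^(i:ℕ) = if y i then 2^(i:ℕ) else 0 := by simp [hy]
      _ ≤ _ := Finset.single_le_sum (f := fun j : Fin n => if y j then 2^(j:ℕ) else 0)
            (fun j _ => Nat.zero_le _) hi
  rw [hsplit x, hsplit y, hhigh]
  omega

lemma exists_top {n : ℕ} {x y : Fin n → Bool} (hne : x ≠ y) :
    ∃ i : Fin n, x i ≠ y i ∧ ∀ j : Fin n, (i:ℕ) < (j:ℕ) → x j = y j := by
  have hD : (univ.filter (fun j : Fin n => x j ≠ y j)).Nonempty := by
    by_contra h
    apply hne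
    funext j
    by_contra hj
    exact h ⟨j, by simpa using hj⟩
  set D := univ.filter (fun j : Fin n => x j ≠ y j)
  refine ⟨D.max' hD, by simpa [D] using D.max'_mem hD, ?_⟩
  intro j hj
  by_contra hjne
  have h1 : j ≤ D.max' hD := Finset.le_max' D j (by simpa [D] using hjne)
  have h2 : (j:ℕ) ≤ (D.max' hD : ℕ) := h1
  omega

lemma decomp {n : ℕ} {K : Type} [Field K] (x y : Fin n → Bool) :
    (if bval x ≤ bval y then (1:K) else 0) =
      (if x = y then (1:K) else 0) +
        ∑ i : Fin n, (if x i = false ∧ y i = true ∧ mskA i x = mskA i y then (1:K) else 0) := by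
  by_cases hxy : x = y
  · subst hxy
    have : ∀ i : Fin n, (if x i = false ∧ x i = true ∧ mskA i x = mskA i x then (1:K) else 0) = 0 := by
      intro i
      rcases h : x i with _ | _ <;> simp [h]
    simp [this]
  · rw [if_neg hxy]
    obtain ⟨i0, hi0ne, hi0ag⟩ := exists_top hxy
    by_cases hle : bval x ≤ bval y
    · rw [if_pos hle]
      have hx0 : x i0 = false := by
        rcases h : x i0 with _ | _
        · rfl
        · exfalso
          have hy0 : y i0 = false := by
            rcases h' : y i0 with _ | _
            · rfl
            · exact absurd (h.trans h'.symm) hi0ne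
          have := bval_lt hy0 h (fun j hj => (hi0ag j hj).symm)
          omega
      have hy0 : y i0 = true := by
        rcases h' : y i0 with _ | _
        · exact absurd (hx0.trans h'.symm) hi0ne
        · rfl
      rw [Finset.sum_eq_single_of_mem i0 (mem_univ _)]
      · rw [if_pos ⟨hx0, hy0, (mskA_eq_iff i0 x y).mpr hi0ag⟩]; norm_num
      · intro j _ hji0
        rw [if_neg]
        rintro ⟨hxj, hyj, hmj⟩
        have hagj := (mskA_eq_iff j x y).mp hmj
        rcases lt_trichotomy ((j:ℕ)) ((i0:ℕ)) with h | h | h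
        · exact hi0ne (hagj i0 h)
        · exact hji0 (Fin.ext h)
        · rw [hi0ag j h] at hxj
          rw [hxj] at hyj
          exact Bool.false_ne_true hyj
    · rw [if_neg hle]
      rw [zero_add]
      symm
      apply Finset.sum_eq_zero
      intro i _
      rw [if_neg]
      rintro ⟨hxi, hyi, hmi⟩
      exact hle (le_of_lt (bval_lt hxi hyi ((mskA_eq_iff i x y).mp hmi)))

lemma sum_ite_ite {K : Type} [Field K] {t : ℕ} (p q : Fin t) :
    (∑ b : Fin t, (if p = b then (1:K) else 0) * (if q = b then (1:K) else 0))
      = if p = q then 1 else 0 := by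
  rw [Finset.sum_eq_single_of_mem p (mem_univ _)]
  · by_cases h : p = q <;> simp [h, eq_comm]
  · intro b _ hb
    simp [Ne.symm hb]

set_option maxHeartbeats 1000000 in
/-- The less-than-or-equal matrix has probabilistic rank O(n²/ε). -/
theorem leq_matrix_probRank :
    ∃ c : ℝ, 0 < c ∧
      ∀ (K : Type) [Field K], ∀ n : ℕ, 1 ≤ n → ∀ ε : ℝ, 0 < ε → ε < 1 →
        ProbRankLE
          (Matrix.of fun x y : Fin n → Bool =>
            if (∑ i : Fin n, if x i then 2 ^ (i : ℕ) else 0) ≤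
               (∑ i : Fin n, if y i then (2 : ℕ) ^ (i : ℕ) else 0)
            then (1 : K) else 0)
          ε (c * n ^ 2 / ε) := by
  refine ⟨8, by norm_num, ?_⟩
  intro K _ n hn ε hε0 hε1
  have hn1 : (1:ℝ) ≤ (n:ℝ) := by exact_mod_cast hn
  set A : Matrix (Fin n → Bool) (Fin n → Bool) K :=
    Matrix.of fun x y : Fin n → Bool =>
      if (∑ i : Fin n, if x i then 2 ^ (i : ℕ) else 0) ≤
         (∑ i : Fin n, if y i then (2 : ℕ) ^ (i : ℕ) else 0)
      then (1 : K) else 0 with hA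
  have hAxy : ∀ x y : Fin n → Bool, A x y = if bval x ≤ bval y then (1:K) else 0 := by
    intro x y; rfl
  set t : ℕ := ⌈((n:ℝ)+1)/ε⌉₊ with ht
  have ht1 : 1 ≤ t := by
    rw [ht]
    have : (0:ℝ) < ((n:ℝ)+1)/ε := by positivity
    exact Nat.ceil_pos.mpr this
  haveI hNE : Nonempty (Fin t) := ⟨⟨0, ht1⟩⟩
  set N : ℕ := Fintype.card ((Option (Fin n)) × (Fin n → Bool) → Fin t) with hNdef
  have hN0 : 0 < N := Fintype.card_pos
  have hN0' : (0:ℝ) < (N:ℝ) := by exact_mod_cast hN0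
  set mat : ((Option (Fin n)) × (Fin n → Bool) → Fin t)
      → Matrix (Fin n → Bool) (Fin n → Bool) K := fun ω =>
    Matrix.of fun x y =>
      (if ω (none, x) = ω (none, y) then (1:K) else 0) +
      ∑ i : Fin n, (if x i = false ∧ y i = true ∧
          ω (some i, mskA i x) = ω (some i, mskA i y) then (1:K) else 0) with hmat
  have base : ∀ P : Matrix (Fin n → Bool) (Fin n → Bool) K → Prop,
      (∑ M ∈ Finset.univ.image mat,
        if P M then ((Finset.univ.filter (fun ω => mat ω = M)).card : ℝ) / (N:ℝ) else 0)
        = ((Finset.univ.filter (fun ω => P (mat ω))).card : ℝ) / (N:ℝ) := by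
    intro P
    rw [Finset.card_eq_sum_card_fiberwise
      (f := mat) (t := Finset.univ.image mat)
      (fun a _ => Finset.mem_image_of_mem mat (Finset.mem_univ a))]
    push_cast
    rw [Finset.sum_div]
    apply Finset.sum_congr rfl
    intro M _
    by_cases hP : P M
    · rw [if_pos hP]
      have hset : (Finset.filter (fun a => mat a = M) (Finset.filter (fun a => P (mat a)) Finset.univ))
          = Finset.filter (fun a => mat a = M) Finset.univ := by
        ext a
        simp only [Finset.mem_filter, Finset.mem_univ, true_and]
        constructor
        · intro h; exact h.2
        · intro h; exact ⟨by rw [h]; exact hP, h⟩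
      rw [hset]
    · rw [if_neg hP]
      have : (Finset.filter (fun a => mat a = M) (Finset.filter (fun a => P (mat a)) Finset.univ)).card = 0 := by
        rw [Finset.card_eq_zero]
        ext a
        simp only [Finset.mem_filter, Finset.mem_univ, true_and, Finset.notMem_empty, iff_false,
          not_and]
        intro hPa hfa
        exact hP (hfa ▸ hPa)
      rw [this]
      simp
  have collision : ∀ γ1 γ2 : (Option (Fin n)) × (Fin n → Bool), γ1 ≠ γ2 →
      (Finset.univ.filter
        (fun ω : ((Option (Fin n)) × (Fin n → Bool)) → Fin t => ω γ1 = ω γ2)).card * t = N := by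
    intro γ1 γ2 hne
    rw [hNdef, ← Fintype.card_subtype]
    have e : {ω : ((Option (Fin n)) × (Fin n → Bool)) → Fin t // ω γ1 = ω γ2} × Fin t
        ≃ (((Option (Fin n)) × (Fin n → Bool)) → Fin t) := by
      refine ⟨fun p => Function.update p.1.1 γ2 p.2,
        fun σ => ⟨⟨Function.update σ γ2 (σ γ1), by
          simp [Function.update_of_ne hne, Function.update_self]⟩, σ γ2⟩, ?_, ?_⟩
      · rintro ⟨⟨ω, hω⟩, c⟩
        have h1 : Function.update (Function.update ω γ2 c) γ2
            ((Function.update ω γ2 c) γ1) = ω := by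
          rw [Function.update_of_ne hne, Function.update_idem, hω, Function.update_eq_self]
        exact Prod.ext (Subtype.ext h1) (by simp)
      · intro σ
        simp only
        rw [Function.update_idem, Function.update_eq_self]
    have hc := Fintype.card_congr e
    simpa [Fintype.card_prod] using hc
  refine ⟨Finset.univ.image mat,
    fun M => ((Finset.univ.filter (fun ω => mat ω = M)).card : ℝ) / (N:ℝ), ?_, ?_, ?_, ?_⟩
  · intro M _
    exact div_nonneg (Nat.cast_nonneg _) (Nat.cast_nonneg _)
  · rw [← Finset.sum_div]
    have hcount : ∑ M ∈ Finset.univ.image mat, (Finset.univ.filter (fun ω => mat ω = M)).card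
        = N := by
      rw [← Finset.card_eq_sum_card_fiberwise
        (f := mat) (t := Finset.univ.image mat)
        (fun a _ => Finset.mem_image_of_mem mat (Finset.mem_univ a))]
      rw [Finset.card_univ]
    rw [div_eq_one_iff_eq (ne_of_gt hN0'), ← Nat.cast_sum, hcount]
  · -- rank bound
    intro M hM
    obtain ⟨ω, -, rfl⟩ := Finset.mem_image.mp hM
    classical
    set U : Matrix (Fin n → Bool) ((Option (Fin n)) × Fin t) K :=
      Matrix.of fun x p =>
        match p.1 with
        | none => if ω (none, x) = p.2 then (1:K) else 0
        | some i => if x i = false then (if ω (some i, mskA i x) = p.2 then (1:K) else 0) else 0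
      with hU
    set V : Matrix ((Option (Fin n)) × Fin t) (Fin n → Bool) K :=
      Matrix.of fun p y =>
        match p.1 with
        | none => if ω (none, y) = p.2 then (1:K) else 0
        | some i => if y i = true then (if ω (some i, mskA i y) = p.2 then (1:K) else 0) else 0
      with hV
    have hfact : mat ω = U * V := by
      ext x y
      rw [Matrix.mul_apply]
      have hs1 : ∑ p : (Option (Fin n)) × Fin t, U x p * V p y
          = ∑ j : Option (Fin n), ∑ b : Fin t, U x (j, b) * V (j, b) y :=
        Fintype.sum_prod_type _
      rw [hs1, Fintype.sum_option]
      show (if ω (none, x) = ω (none, y) then (1:K) else 0) +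
        ∑ i : Fin n, (if x i = false ∧ y i = true ∧
          ω (some i, mskA i x) = ω (some i, mskA i y) then (1:K) else 0) = _
      congr 1
      · exact (sum_ite_ite _ _).symm
      · apply Finset.sum_congr rfl
        intro i _
        show (if x i = false ∧ y i = true ∧
            ω (some i, mskA i x) = ω (some i, mskA i y) then (1:K) else 0)
          = ∑ b : Fin t, (if x i = false then (if ω (some i, mskA i x) = b then (1:K) else 0) else 0)
              * (if y i = true then (if ω (some i, mskA i y) = b then (1:K) else 0) else 0)
        by_cases hxi : x i = false
        · by_cases hyi : y i = true
          · simp only [hxi, hyi, if_true, true_and]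
            exact (sum_ite_ite _ _).symm
          · simp [hxi, hyi]
        · simp [hxi]
    rw [hfact]
    have hrk : (U * V).rank ≤ (n+1) * t :=
      le_trans (Matrix.rank_mul_le_left U V)
        (le_trans (Matrix.rank_le_card_width U) (by simp [Fintype.card_prod]))
    have hcast : ((U * V).rank : ℝ) ≤ ((n:ℝ)+1) * (t:ℝ) := by exact_mod_cast hrk
    have htε : (t:ℝ) * ε ≤ 2*((n:ℝ)+1) := by
      have h1 : (t:ℝ) < ((n:ℝ)+1)/ε + 1 := by
        rw [ht]; exact Nat.ceil_lt_add_one (by positivity)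
      have h2 : (t:ℝ) * ε < ((n:ℝ)+1) + ε := by
        calc (t:ℝ) * ε < (((n:ℝ)+1)/ε + 1) * ε := by nlinarith
          _ = ((n:ℝ)+1) + ε := by field_simp
      nlinarith
    rw [le_div_iff₀ hε0]
    nlinarith [hcast, htε, hn1, hε0.le]
  · -- probability bound
    intro x y
    rw [base (fun M => M x y = A x y)]
    rw [le_div_iff₀ hN0']
    set G : Finset ((Option (Fin n)) × (Fin n → Bool) → Fin t) :=
      Finset.univ.filter (fun ω =>
        (x = y ∨ ω (none, x) ≠ ω (none, y)) ∧
        ∀ i : Fin n, mskA i x = mskA i y ∨ ω (some i, mskA i x) ≠ ω (some i, mskA i y)) with hG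
    have hmatch : ∀ ω ∈ G, mat ω x y = A x y := by
      intro ω hg
      rw [hG, Finset.mem_filter] at hg
      obtain ⟨-, hg1, hg2⟩ := hg
      rw [hAxy, decomp x y]
      show (if ω (none, x) = ω (none, y) then (1:K) else 0) +
        ∑ i : Fin n, (if x i = false ∧ y i = true ∧
          ω (some i, mskA i x) = ω (some i, mskA i y) then (1:K) else 0) = _
      congr 1
      · rcases hg1 with h | h
        · subst h; simp
        · rw [if_neg h, if_neg]
          intro hxy; exact h (by rw [hxy])
      · apply Finset.sum_congr rfl
        intro i _
        rcases hg2 i with h | h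
        · by_cases hc : x i = false ∧ y i = true
          · rw [if_pos ⟨hc.1, hc.2, by rw [h]⟩, if_pos ⟨hc.1, hc.2, h⟩]
          · rw [if_neg (by tauto), if_neg (by tauto)]
        · rw [if_neg (by tauto), if_neg]
          rintro ⟨-, -, hm⟩
          exact h (by rw [hm])
    set Bad : Finset ((Option (Fin n)) × (Fin n → Bool) → Fin t) :=
      Finset.univ.filter (fun ω => ¬ (
        (x = y ∨ ω (none, x) ≠ ω (none, y)) ∧
        ∀ i : Fin n, mskA i x = mskA i y ∨ ω (some i, mskA i x) ≠ ω (some i, mskA i y))) with hBad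
    have hGBad : G.card + Bad.card = N := by
      rw [hG, hBad, Finset.card_filter_add_card_filter_not, Finset.card_univ]
    set B : Option (Fin n) → Finset ((Option (Fin n)) × (Fin n → Bool) → Fin t) := fun j =>
      match j with
      | none => if x = y then ∅ else Finset.univ.filter (fun ω => ω (none, x) = ω (none, y))
      | some i => if mskA i x = mskA i y then ∅
          else Finset.univ.filter (fun ω => ω (some i, mskA i x) = ω (some i, mskA i y)) with hB
    have hsub : Bad ⊆ Finset.univ.biUnion B := by
      intro ω hω
      rw [hBad, Finset.mem_filter] at hω
      obtain ⟨-, hω⟩ := hω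
      rw [Finset.mem_biUnion]
      by_cases h1 : (x = y ∨ ω (none, x) ≠ ω (none, y))
      · have h2 : ∃ i : Fin n, mskA i x ≠ mskA i y ∧
            ω (some i, mskA i x) = ω (some i, mskA i y) := by
          by_contra hc
          push_neg at hc
          apply hω
          refine ⟨h1, fun i => ?_⟩
          by_cases hm : mskA i x = mskA i y
          · exact Or.inl hm
          · exact Or.inr (fun hcol => (hc i hm) hcol)
        obtain ⟨i, hi1, hi2⟩ := h2
        refine ⟨some i, Finset.mem_univ _, ?_⟩
        have : B (some i) = Finset.univ.filter
            (fun ω => ω (some i, mskA i x) = ω (some i, mskA i y)) := by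
          rw [hB]; simp only; rw [if_neg hi1]
        rw [this]
        exact Finset.mem_filter.mpr ⟨Finset.mem_univ _, hi2⟩
      · push_neg at h1
        refine ⟨none, Finset.mem_univ _, ?_⟩
        have : B none = Finset.univ.filter (fun ω => ω (none, x) = ω (none, y)) := by
          rw [hB]; simp only; rw [if_neg h1.1]
        rw [this]
        exact Finset.mem_filter.mpr ⟨Finset.mem_univ _, h1.2⟩
    have hBj : ∀ j : Option (Fin n), (B j).card * t ≤ N := by
      intro j
      match j with
      | none =>
        by_cases h : x = y
        · have : B none = ∅ := by rw [hB]; simp only; rw [if_pos h]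
          rw [this]; simp [hN0.le]
        · have hBe : B none = Finset.univ.filter (fun ω => ω (none, x) = ω (none, y)) := by
            rw [hB]; simp only; rw [if_neg h]
          rw [hBe]
          have hne : ((none, x) : (Option (Fin n)) × (Fin n → Bool)) ≠ (none, y) := by
            intro hc
            exact h (congrArg Prod.snd hc)
          exact le_of_eq (collision _ _ hne)
      | some i =>
        by_cases h : mskA i x = mskA i y
        · have : B (some i) = ∅ := by rw [hB]; simp only; rw [if_pos h]
          rw [this]; simp [hN0.le]
        · have hBe : B (some i) = Finset.univ.filter
              (fun ω => ω (some i, mskA i x) = ω (some i, mskA i y)) := by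
            rw [hB]; simp only; rw [if_neg h]
          rw [hBe]
          have hne : ((some i, mskA i x) : (Option (Fin n)) × (Fin n → Bool))
              ≠ (some i, mskA i y) := by
            intro hc
            exact h (congrArg Prod.snd hc)
          exact le_of_eq (collision _ _ hne)
    have hBadcard : Bad.card * t ≤ (n+1) * N := by
      calc Bad.card * t ≤ (Finset.univ.biUnion B).card * t :=
            Nat.mul_le_mul_right t (Finset.card_le_card hsub)
        _ ≤ (∑ j : Option (Fin n), (B j).card) * t :=
            Nat.mul_le_mul_right t Finset.card_biUnion_le
        _ = ∑ j : Option (Fin n), (B j).card * t := by rw [Finset.sum_mul]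
        _ ≤ ∑ _j : Option (Fin n), N := Finset.sum_le_sum (fun j _ => hBj j)
        _ = (n+1) * N := by simp [Fintype.card_option, mul_comm]
    have hceil : ((n:ℝ)+1) ≤ (t:ℝ) * ε := by
      have hle := Nat.le_ceil (((n:ℝ)+1)/ε)
      rw [← ht] at hle
      calc ((n:ℝ)+1) = (((n:ℝ)+1)/ε) * ε := by field_simp
        _ ≤ (t:ℝ) * ε := by nlinarith
    have ht0' : (0:ℝ) < (t:ℝ) := by exact_mod_cast ht1
    have hBadR : (Bad.card : ℝ) ≤ ε * N := by
      have h1 : (Bad.card : ℝ) * t ≤ ((n:ℝ)+1) * N := by exact_mod_cast hBadcard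
      have h2 : ((n:ℝ)+1) * N ≤ (t:ℝ) * ε * N := by nlinarith
      nlinarith
    have hGR : ((N:ℝ) - ε * N) ≤ (G.card : ℝ) := by
      have hc : (G.card : ℝ) + (Bad.card : ℝ) = (N:ℝ) := by exact_mod_cast hGBad
      linarith
    refine le_trans ?_ (Nat.cast_le.mpr (Finset.card_le_card
      (fun ω hω => Finset.mem_filter.mpr ⟨Finset.mem_univ _, hmatch ω hω⟩)))
    · linarith [hGR]
end
end

section
/- There is a constant c > 0 such that the following holds. Let K be a field, let n ≥ 1, let ε ∈ (0,1), and let v₁,…,vₙ, w₁,…,wₙ, θ ∈ ℝ. Define the linear threshold function f : {0,1}^n × {0,1}^n → {0,1} by f(x,y) = 1 if Σᵢ vᵢxᵢ + Σᵢ wᵢyᵢ ≥ θ and f(x,y) = 0 otherwise. Then the 2^n × 2^n truth table matrix M_f, whose entries are the elements 0, 1 of K, has ε-probabilistic rank at most c·n²/ε over K. -/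
open scoped Classical
open Finset

noncomputable section

/-!
Writing the threshold matrix as `[g y ≤ f x]` and replacing the at most `2 ^ (n + 1)` values of
`f` and `g` by their ranks turns it into the comparison `[j ≤ i]` of `(n + 1)`-bit integers.
Comparison is a sum over binary digits `s` of `[i and j agree above s] · [i_s = 1] · [j_s = 0]`,
so the matrix is a sum of `n + 2` equality tests with rank-one weights. Hashing the keys of every
equality test into `m` buckets gives a matrix of rank at most `(n + 2) m`, which is wrong at an
entry only if some test collides, which happens with probability at most `(n + 2) / m ≤ ε`.
-/

theorem Finset.exists_rank_lt_card_le_iff {α : Type*} [LinearOrder α] (V : Finset α) :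
    ∃ r : α → ℕ, (∀ a ∈ V, r a < #V) ∧ ∀ a ∈ V, ∀ b ∈ V, (a ≤ b ↔ r a ≤ r b) := by
  refine ⟨fun a => if h : a ∈ V then (V.orderIsoOfFin rfl).symm ⟨a, h⟩ else 0, ?_, ?_⟩
  · intro a ha
    simp [ha]
  · intro a ha b hb
    simp only [ha, hb, dif_pos, Fin.val_fin_le, OrderIso.le_iff_le, Subtype.mk_le_mk]

-- The only nonzero summand is at the most significant binary digit where `i` and `j` differ.
theorem Nat.ite_lt_eq_sum_binary {R : Type*} [NonAssocSemiring R] (L i j : ℕ)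
    (h : i / 2 ^ L = j / 2 ^ L) :
    (if j < i then 1 else 0 : R) = ∑ s ∈ range L,
      if i / 2 ^ (s + 1) = j / 2 ^ (s + 1) then
        (if i / 2 ^ s % 2 = 1 then 1 else 0) * (if j / 2 ^ s % 2 = 0 then 1 else 0) else 0 := by
  induction L generalizing i j with
  | zero =>
    obtain rfl : i = j := by simpa using h
    simp
  | succ L ih =>
    have hshift : ∀ k s, k / 2 / 2 ^ s = k / 2 ^ (s + 1) := fun k s => by
      rw [Nat.div_div_eq_div_mul, ← pow_succ']
    have h' : i / 2 / 2 ^ L = j / 2 / 2 ^ L := by rwa [hshift, hshift]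
    rw [sum_range_succ']
    simp only [← hshift i, ← hshift j, ← ih _ _ h', zero_add, pow_zero, pow_one, Nat.div_one]
    split_ifs <;> simp <;> omega

theorem Fintype.card_filter_apply_eq_apply_mul_card {D β : Type*} [Fintype D] [DecidableEq D]
    [Fintype β] [DecidableEq β] {d d' : D} (h : d ≠ d') :
    #{H : D → β | H d = H d'} * card β = card (D → β) := by
  rw [← Fintype.card_subtype, ← Fintype.card_prod]
  refine Fintype.card_congr
    { toFun := fun p => Function.update p.1.1 d' p.2
      invFun := fun G => (⟨Function.update G d' (G d), by simp [h]⟩, G d')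
      left_inv := fun ⟨⟨H, hH⟩, c⟩ => by simp [h, ← hH]
      right_inv := fun G => by simp }

section Hashing

variable {X Y T κ K : Type*} [Fintype T] [Field K]
  (kx : T → X → κ) (ky : T → Y → κ) (a : T → X → K) (b : T → Y → K)

-- `∑ t, [kx t x = ky t y] * a t x * b t y` with each equality test replaced by a collision test of
-- the hash `H`.
def hashedMatrix {m : ℕ} (H : T × κ → Fin m) : Matrix X Y K :=
  (Matrix.of fun x p => if H (p.1, kx p.1 x) = p.2 then a p.1 x else 0 :
      Matrix X (T × Fin m) K) *
    (Matrix.of fun p y => if H (p.1, ky p.1 y) = p.2 then b p.1 y else 0 :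
      Matrix (T × Fin m) Y K)

theorem hashedMatrix_apply {m : ℕ} (H : T × κ → Fin m) (x : X) (y : Y) :
    hashedMatrix kx ky a b H x y =
      ∑ t, if H (t, kx t x) = H (t, ky t y) then a t x * b t y else 0 := by
  rw [hashedMatrix, Matrix.mul_apply, Fintype.sum_prod_type]
  refine sum_congr rfl fun t _ => ?_
  rw [Fintype.sum_eq_single (H (t, kx t x)) fun c hc => by simp [Ne.symm hc]]
  simp [eq_comm]

theorem hashedMatrix_apply_of_forall_ne [DecidableEq κ] {m : ℕ} (H : T × κ → Fin m)
    (x : X) (y : Y) (h : ∀ t, kx t x ≠ ky t y → H (t, kx t x) ≠ H (t, ky t y)) :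
    hashedMatrix kx ky a b H x y = ∑ t, if kx t x = ky t y then a t x * b t y else 0 := by
  rw [hashedMatrix_apply]
  refine sum_congr rfl fun t _ => if_congr ⟨fun hH => ?_, fun hk => by rw [hk]⟩ rfl rfl
  by_contra hk
  exact h t hk hH

theorem rank_hashedMatrix_le [Fintype Y] {m : ℕ} (H : T × κ → Fin m) :
    (hashedMatrix kx ky a b H).rank ≤ Fintype.card T * m :=
  (Matrix.rank_mul_le_left _ _).trans <| (Matrix.rank_le_card_width _).trans_eq <| by simp

end Hashing

theorem ProbRankLE.mono {n : ℕ} {K : Type} [Field K] {A : Matrix (Fin n → Bool) (Fin n → Bool) K}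
    {ε r r' : ℝ} (h : ProbRankLE A ε r) (hr : r ≤ r') : ProbRankLE A ε r' :=
  let ⟨s, w, hw, hsum, hrank, hent⟩ := h
  ⟨s, w, hw, hsum, fun M hM => (hrank M hM).trans hr, hent⟩

theorem ProbRankLE.of_uniform {n : ℕ} {K : Type} [Field K] {Ω : Type*} [Fintype Ω] [Nonempty Ω]
    {A : Matrix (Fin n → Bool) (Fin n → Bool) K} {ε r : ℝ}
    (M : Ω → Matrix (Fin n → Bool) (Fin n → Bool) K) (hrank : ∀ ω, ((M ω).rank : ℝ) ≤ r)
    (herr : ∀ x y, (#{ω | M ω x y ≠ A x y} : ℝ) ≤ ε * Fintype.card Ω) :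
    ProbRankLE A ε r := by
  have hΩ : (0 : ℝ) < Fintype.card Ω := by exact_mod_cast Fintype.card_pos
  refine ⟨univ.image M, fun N => #{ω | M ω = N} / Fintype.card Ω, fun _ _ => by positivity,
    ?_, ?_, fun x y => ?_⟩
  · rw [← sum_div, ← Nat.cast_sum, ← card_eq_sum_card_image, card_univ, div_self hΩ.ne']
  · intro _ hN
    obtain ⟨ω, -, rfl⟩ := mem_image.1 hN
    exact hrank ω
  · have hgood : ∑ N ∈ univ.image M,
        (if N x y = A x y then (#{ω | M ω = N} : ℝ) / Fintype.card Ω else 0) =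
        #{ω | M ω x y = A x y} / Fintype.card Ω := by
      rw [sum_image' (fun ω => if M ω x y = A x y then 1 / (Fintype.card Ω : ℝ) else 0)]
      · rw [← sum_filter, sum_const, nsmul_eq_mul, mul_one_div]
      · intro ω _
        rw [sum_congr rfl fun ω' hω' => by rw [(mem_filter.1 hω').2], sum_const, nsmul_eq_mul]
        split_ifs <;> simp [div_eq_mul_inv]
    have hsplit : (#{ω | M ω x y = A x y} : ℝ) + #{ω | M ω x y ≠ A x y} = Fintype.card Ω := by
      exact_mod_cast card_filter_add_card_filter_not (s := univ) (fun ω => M ω x y = A x y)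
    rw [hgood, le_div_iff₀ hΩ]
    linarith [herr x y]

-- A uniformly random hash errs at `(x, y)` only if one of the `card T` pairs of distinct keys
-- collides, each with probability `1 / m`.
theorem ProbRankLE.of_eq_sum_ite_eq {n : ℕ} {K : Type} [Field K] {T κ : Type*} [Fintype T]
    [Fintype κ] [DecidableEq κ] {A : Matrix (Fin n → Bool) (Fin n → Bool) K}
    (kx ky : T → (Fin n → Bool) → κ) (a b : T → (Fin n → Bool) → K)
    (hA : ∀ x y, A x y = ∑ t, if kx t x = ky t y then a t x * b t y else 0)
    {ε : ℝ} {m : ℕ} (hm : 0 < m) (hTm : (Fintype.card T : ℝ) ≤ ε * m) :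
    ProbRankLE A ε (Fintype.card T * m) := by
  have : Nonempty (T × κ → Fin m) := ⟨fun _ => ⟨0, hm⟩⟩
  refine .of_uniform (hashedMatrix kx ky a b)
    (fun H => by exact_mod_cast rank_hashedMatrix_le kx ky a b H) fun x y => ?_
  have hbad : ({H | hashedMatrix kx ky a b H x y ≠ A x y} : Finset (T × κ → Fin m)) ⊆
      univ.biUnion fun t => {H | kx t x ≠ ky t y ∧ H (t, kx t x) = H (t, ky t y)} := by
    intro H hH
    simp only [mem_filter, mem_univ, true_and, mem_biUnion] at hH ⊢
    by_contra! hno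
    exact hH ((hashedMatrix_apply_of_forall_ne kx ky a b H x y hno).trans (hA x y).symm)
  have hcollision : ∀ t,
      #{H : T × κ → Fin m | kx t x ≠ ky t y ∧ H (t, kx t x) = H (t, ky t y)} * m ≤
        Fintype.card (T × κ → Fin m) := by
    intro t
    by_cases hk : kx t x = ky t y
    · simp [hk]
    · rw [← Fintype.card_filter_apply_eq_apply_mul_card (β := Fin m)
        (d := (t, kx t x)) (d' := (t, ky t y)) (by simpa using hk), Fintype.card_fin]
      exact Nat.mul_le_mul_right _ (card_le_card fun H hH => by simp_all)
  have hcount : #{H : T × κ → Fin m | hashedMatrix kx ky a b H x y ≠ A x y} * m ≤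
      Fintype.card T * Fintype.card (T × κ → Fin m) := by
    calc _ ≤ (∑ t, #{H : T × κ → Fin m | kx t x ≠ ky t y ∧ H (t, kx t x) = H (t, ky t y)}) *
          m := by
          gcongr
          exact (card_le_card hbad).trans card_biUnion_le
      _ ≤ _ := by
          rw [sum_mul]
          simpa using sum_le_sum fun t (_ : t ∈ univ) => hcollision t
  have hm' : (0 : ℝ) < m := by exact_mod_cast hm
  rw [← mul_le_mul_iff_of_pos_right hm']
  calc _ ≤ (Fintype.card T * Fintype.card (T × κ → Fin m) : ℝ) := by exact_mod_cast hcount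
    _ ≤ _ := by nlinarith

theorem ProbRankLE.ite_le_of_lt_two_pow {n : ℕ} {K : Type} [Field K] {L : ℕ}
    (i j : (Fin n → Bool) → ℕ) (hi : ∀ x, i x < 2 ^ L) (hj : ∀ y, j y < 2 ^ L)
    {ε : ℝ} {m : ℕ} (hm : 0 < m) (hLm : (L + 1 : ℝ) ≤ ε * m) :
    ProbRankLE (Matrix.of fun x y => if j y ≤ i x then (1 : K) else 0) ε ((L + 1) * m) := by
  -- `j ≤ i ↔ 2j < 2i + 1`, and both sides have `L + 1` binary digits
  have hkey : ∀ k s, k < 2 ^ (L + 1) → k / 2 ^ (s + 1) < 2 ^ (L + 1) := fun k s hk =>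
    (Nat.div_le_self _ _).trans_lt hk
  have hx : ∀ x, 2 * i x + 1 < 2 ^ (L + 1) := fun x => by have := hi x; rw [pow_succ]; omega
  have hy : ∀ y, 2 * j y < 2 ^ (L + 1) := fun y => by have := hj y; rw [pow_succ]; omega
  have hT : (Fintype.card (Fin (L + 1)) : ℝ) = L + 1 := by simp
  rw [← hT]
  refine ProbRankLE.of_eq_sum_ite_eq
    (fun (s : Fin (L + 1)) x =>
      (⟨(2 * i x + 1) / 2 ^ (s + 1 : ℕ), hkey _ _ (hx x)⟩ : Fin (2 ^ (L + 1))))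
    (fun s y => ⟨2 * j y / 2 ^ (s + 1 : ℕ), hkey _ _ (hy y)⟩)
    (fun s x => if (2 * i x + 1) / 2 ^ (s : ℕ) % 2 = 1 then 1 else 0)
    (fun s y => if 2 * j y / 2 ^ (s : ℕ) % 2 = 0 then 1 else 0) (fun x y => ?_) hm (hT ▸ hLm)
  have hdigits : (2 * i x + 1) / 2 ^ (L + 1) = 2 * j y / 2 ^ (L + 1) := by
    rw [Nat.div_eq_of_lt (hx x), Nat.div_eq_of_lt (hy y)]
  rw [Matrix.of_apply, if_congr (show j y ≤ i x ↔ 2 * j y < 2 * i x + 1 by omega) rfl rfl,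
    Nat.ite_lt_eq_sum_binary _ _ _ hdigits, Finset.sum_range]
  simp only [Fin.mk.injEq]

theorem ProbRankLE.ite_le {n : ℕ} {K : Type} [Field K] {α : Type*} [LinearOrder α]
    (f g : (Fin n → Bool) → α) {ε : ℝ} {m : ℕ} (hm : 0 < m) (hnm : (n + 2 : ℝ) ≤ ε * m) :
    ProbRankLE (Matrix.of fun x y => if g y ≤ f x then (1 : K) else 0) ε ((n + 2) * m) := by
  set V := univ.image f ∪ univ.image g
  have hV : #V ≤ 2 ^ (n + 1) := calc
    #V ≤ #(univ.image f) + #(univ.image g) := card_union_le _ _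
    _ ≤ 2 ^ n + 2 ^ n := by gcongr <;> exact card_image_le.trans (by simp)
    _ = 2 ^ (n + 1) := by ring
  obtain ⟨r, hr_lt, hr_le⟩ := V.exists_rank_lt_card_le_iff
  have hfV : ∀ x, f x ∈ V := fun x => mem_union_left _ (mem_image_of_mem f (mem_univ x))
  have hgV : ∀ y, g y ∈ V := fun y => mem_union_right _ (mem_image_of_mem g (mem_univ y))
  have hcmp := ProbRankLE.ite_le_of_lt_two_pow (K := K) (L := n + 1) (r ∘ f) (r ∘ g)
    (fun x => (hr_lt _ (hfV x)).trans_le hV) (fun y => (hr_lt _ (hgV y)).trans_le hV) hm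
    (by push_cast; linarith)
  convert hcmp using 2
  · ext x y
    simp [hr_le _ (hgV y) _ (hfV x)]
  · push_cast; ring

/-- Every linear threshold function has probabilistic rank O(n²/ε). -/
theorem ltf_probRank :
    ∃ c : ℝ, 0 < c ∧
      ∀ (K : Type) [Field K], ∀ n : ℕ, 1 ≤ n → ∀ ε : ℝ, 0 < ε → ε < 1 →
        ∀ (v w : Fin n → ℝ) (θ : ℝ),
          ProbRankLE
            (Matrix.of fun x y : Fin n → Bool =>
              if θ ≤ (∑ i, v i * (if x i then (1 : ℝ) else 0)) +
                     (∑ i, w i * (if y i then (1 : ℝ) else 0))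
              then (1 : K) else 0)
            ε (c * n ^ 2 / ε) := by
  refine ⟨12, by norm_num, fun K _ n hn ε hε hε1 v w θ => ?_⟩
  set m := ⌈(n + 2 : ℝ) / ε⌉₊
  have hm_ge : (n + 2 : ℝ) / ε ≤ m := Nat.le_ceil _
  have hm_lt : (m : ℝ) < (n + 2) / ε + 1 := Nat.ceil_lt_add_one (by positivity)
  have hthreshold := ProbRankLE.ite_le (K := K) (fun x => ∑ i, v i * if x i then 1 else 0)
    (fun y => θ - ∑ i, w i * if y i then 1 else 0) (Nat.ceil_pos.2 (by positivity))
    ((div_le_iff₀' hε).1 hm_ge)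
  simp only [sub_le_iff_le_add] at hthreshold
  refine hthreshold.mono ?_
  have hn' : (1 : ℝ) ≤ n := by exact_mod_cast hn
  have hmε : m * ε < n + 2 + ε := by
    have := (mul_lt_mul_iff_of_pos_right hε).2 hm_lt
    rwa [add_mul, div_mul_cancel₀ _ hε.ne', one_mul] at this
  rw [le_div_iff₀ hε]
  nlinarith
end
end
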